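/- arXiv:0711.2701 — 12 statements merged into one kernel-verified Lean document; each statement's English description precedes it below -/
import Mathlib

section
/- Let $b_n$ be a real sequence with $b_n \le b_{n+1} < 0$ for all $n$, and let $x \in (0,2)$. Suppose $x - b_n \ge 2$ for all $n \le N$. Define $\gamma_n \ge 0$ by $x - b_n = 2\cosh(\gamma_n)$ for $n \le N$. Define $\psi_n$ by $\psi_{-1}=0$, $\psi_0=1$, and $\psi_{n+1} = (1+e^{-2\gamma_{n+1}})\psi_n - e^{-(\gamma_n+\gamma_{n+1})}\psi_{n-1}$. Then $\psi_{n+1} \ge \psi_n$ for all $0 \le n < N$, and in particular $\psi_n \ge 1$ for $0 \le n \le N$. -/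
/-!
Write the recurrence as `ψₙ₊₁ - ψₙ = e^{-2γₙ₊₁} ψₙ - e^{-(γₙ+γₙ₊₁)} ψₙ₋₁`. Since `b` is nondecreasing,
`cosh γₙ₊₁ ≤ cosh γₙ`, so `γₙ₊₁ ≤ γₙ` and `e^{-2γₙ₊₁} ≥ e^{-(γₙ+γₙ₊₁)}`. Hence, as long as `ψₙ ≥ 0`,
`ψₙ₊₁ - ψₙ ≥ e^{-(γₙ+γₙ₊₁)} (ψₙ - ψₙ₋₁)`, and monotonicity propagates by induction from
`ψ₋₁ = 0 ≤ 1 = ψ₀`.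
-/

open Real

lemma le_of_sub_eq_two_mul_cosh {x b b' g g' : ℝ} (hb : b ≤ b') (hg : 0 ≤ g) (hg' : 0 ≤ g')
    (h : x - b = 2 * cosh g) (h' : x - b' = 2 * cosh g') : g' ≤ g :=
  (cosh_strictMonoOn.le_iff_le hg' hg).mp (by linarith)

lemma le_of_eq_one_add_mul_sub_mul {p q r α β : ℝ} (hβ : 0 ≤ β) (hβα : β ≤ α) (hq : 0 ≤ q)
    (hpq : p ≤ q) (hr : r = (1 + α) * q - β * p) : q ≤ r := by
  have : β * p ≤ α * q :=
    calc β * p ≤ β * q := mul_le_mul_of_nonneg_left hpq hβ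
      _ ≤ α * q := mul_le_mul_of_nonneg_right hβα hq
  linarith

theorem stmt_0_general (b γ ψ : ℤ → ℝ) (N : ℤ) (x : ℝ)
    (hb : ∀ n : ℤ, b n ≤ b (n + 1))
    (hγ : ∀ n ≤ N, 0 ≤ γ n ∧ x - b n = 2 * Real.cosh (γ n))
    (hψm1 : ψ (-1) = 0) (hψ0 : ψ 0 = 1)
    (hrec : ∀ n : ℤ, 0 ≤ n → n < N →
      ψ (n + 1) = (1 + Real.exp (-2 * γ (n + 1))) * ψ n
        - Real.exp (-(γ n + γ (n + 1))) * ψ (n - 1)) :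
    (∀ n : ℤ, 0 ≤ n → n < N → ψ n ≤ ψ (n + 1)) ∧
    (∀ n : ℤ, 0 ≤ n → n ≤ N → 1 ≤ ψ n) := by
  have key : ∀ n, 0 ≤ n → n ≤ N → ψ (n - 1) ≤ ψ n ∧ 1 ≤ ψ n := by
    refine Int.leInduction (by simp [hψm1, hψ0]) fun n hn ih hnN => ?_
    have hnN' : n < N := by lia
    obtain ⟨hmono, hone⟩ := ih hnN'.le
    have hγle : γ (n + 1) ≤ γ n :=
      le_of_sub_eq_two_mul_cosh (hb n) (hγ n hnN'.le).1 (hγ (n + 1) hnN).1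
        (hγ n hnN'.le).2 (hγ (n + 1) hnN).2
    have hstep : ψ n ≤ ψ (n + 1) :=
      le_of_eq_one_add_mul_sub_mul (exp_pos _).le (exp_le_exp.mpr (by linarith))
        (by linarith) hmono (hrec n hn hnN')
    exact ⟨by simpa using hstep, hone.trans hstep⟩
  refine ⟨fun n hn hnN => ?_, fun n hn hnN => (key n hn hnN).2⟩
  simpa using (key (n + 1) (by lia) (by lia)).1

theorem stmt_0 (b γ ψ : ℤ → ℝ) (N : ℤ) (x : ℝ)
    (hb : ∀ n : ℤ, b n ≤ b (n + 1)) (hbneg : ∀ n : ℤ, b n < 0)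
    (hx : 0 < x ∧ x < 2)
    (hforb : ∀ n ≤ N, 2 ≤ x - b n)
    (hγ : ∀ n ≤ N, 0 ≤ γ n ∧ x - b n = 2 * Real.cosh (γ n))
    (hψm1 : ψ (-1) = 0) (hψ0 : ψ 0 = 1)
    (hrec : ∀ n : ℤ, 0 ≤ n → n < N →
      ψ (n + 1) = (1 + Real.exp (-2 * γ (n + 1))) * ψ n
        - Real.exp (-(γ n + γ (n + 1))) * ψ (n - 1)) :
    (∀ n : ℤ, 0 ≤ n → n < N → ψ n ≤ ψ (n + 1)) ∧
    (∀ n : ℤ, 0 ≤ n → n ≤ N → 1 ≤ ψ n) :=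
  stmt_0_general b γ ψ N x hb hγ hψm1 hψ0 hrec
end

section
/- Under the same hypotheses ($b_n \le b_{n+1} < 0$, $x-b_n = 2\cosh(\gamma_n) \ge 2$ for $n \le N$, $\psi_{-1}=0$, $\psi_0=1$, $\psi_{n+1} = (1+e^{-2\gamma_{n+1}})\psi_n - e^{-(\gamma_n+\gamma_{n+1})}\psi_{n-1}$), define $W_n = e^{\gamma_{n+1}}\psi_n - e^{-\gamma_n}\psi_{n-1}$ for $0 \le n \le N-1$. Then $W_n \le e^{\gamma_{n+1}}$ for all such $n$. -/
/-!
With `a n = exp (-γ n)` the recursion reads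
`ψ (n+1) = (1 + a (n+1)^2) ψ n - a n a (n+1) ψ (n-1)`, and `a` is nondecreasing because `b` is and
`cosh` is increasing on `[0, ∞)`. The claim is `ψ n - a n a (n+1) ψ (n-1) ≤ 1`. This quantity equals
`1` at `n = 0`, and one step of the recursion changes it by `a (n+1) (a (n+1) - a (n+2)) ψ n ≤ 0`,
so it suffices that `ψ ≥ 0`. That follows by induction together with
`a n ψ (n-1) ≤ a (n+1) ψ n`, since `ψ (n+1) - ψ n = a (n+1) (a (n+1) ψ n - a n ψ (n-1))`.
-/

open Real

section ThreeTermRecurrence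

variable {a ψ : ℤ → ℝ} {N : ℤ}

theorem nonneg_and_mul_le_mul_of_threeTermRec (ha : ∀ n, 0 ≤ a n)
    (hmono : ∀ n, n + 1 ≤ N → a n ≤ a (n + 1)) (hψm1 : ψ (-1) = 0) (hψ0 : ψ 0 = 1)
    (hrec : ∀ n, 0 ≤ n → n < N →
      ψ (n + 1) = (1 + a (n + 1) ^ 2) * ψ n - a n * a (n + 1) * ψ (n - 1)) :
    ∀ n, 0 ≤ n → n ≤ N - 1 → 0 ≤ ψ n ∧ a n * ψ (n - 1) ≤ a (n + 1) * ψ n := by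
  refine Int.leInduction ?_ ?_
  · intro _
    simp [hψm1, hψ0, ha]
  · intro n hn ih hnN
    obtain ⟨hψn, hflux⟩ := ih (by omega)
    have hdiff : ψ (n + 1) - ψ n = a (n + 1) * (a (n + 1) * ψ n - a n * ψ (n - 1)) := by
      rw [hrec n hn (by omega)]; ring
    have hψle : ψ n ≤ ψ (n + 1) := by
      nlinarith [mul_nonneg (ha (n + 1)) (sub_nonneg.mpr hflux)]
    have hψsucc : 0 ≤ ψ (n + 1) := hψn.trans hψle
    refine ⟨hψsucc, ?_⟩
    rw [add_sub_cancel_right]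
    exact mul_le_mul (hmono (n + 1) (by omega)) hψle hψn (ha _)

theorem sub_mul_le_one_of_threeTermRec (ha : ∀ n, 0 ≤ a n)
    (hmono : ∀ n, n + 1 ≤ N → a n ≤ a (n + 1)) (hψm1 : ψ (-1) = 0) (hψ0 : ψ 0 = 1)
    (hrec : ∀ n, 0 ≤ n → n < N →
      ψ (n + 1) = (1 + a (n + 1) ^ 2) * ψ n - a n * a (n + 1) * ψ (n - 1)) :
    ∀ n, 0 ≤ n → n ≤ N - 1 → ψ n - a n * a (n + 1) * ψ (n - 1) ≤ 1 := by
  refine Int.leInduction ?_ ?_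
  · intro _
    simp [hψm1, hψ0]
  · intro n hn ih hnN
    have hψn := (nonneg_and_mul_le_mul_of_threeTermRec ha hmono hψm1 hψ0 hrec n hn
      (by omega)).1
    have hstep : ψ (n + 1) - a (n + 1) * a (n + 1 + 1) * ψ (n + 1 - 1)
        = ψ n - a n * a (n + 1) * ψ (n - 1)
          - a (n + 1) * (a (n + 1 + 1) - a (n + 1)) * ψ n := by
      rw [hrec n hn (by omega), add_sub_cancel_right]; ring
    have hdecr : 0 ≤ a (n + 1) * (a (n + 1 + 1) - a (n + 1)) * ψ n :=
      mul_nonneg (mul_nonneg (ha _) (sub_nonneg.mpr (hmono (n + 1) (by omega)))) hψn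
    linarith [ih (by omega)]

end ThreeTermRecurrence

theorem stmt_1_general (b γ ψ W : ℤ → ℝ) (N : ℤ) (x : ℝ)
    (hb : ∀ n : ℤ, b n ≤ b (n + 1))
    (hγ : ∀ n ≤ N, 0 ≤ γ n ∧ x - b n = 2 * Real.cosh (γ n))
    (hψm1 : ψ (-1) = 0) (hψ0 : ψ 0 = 1)
    (hrec : ∀ n : ℤ, 0 ≤ n → n < N →
      ψ (n + 1) = (1 + Real.exp (-2 * γ (n + 1))) * ψ n
        - Real.exp (-(γ n + γ (n + 1))) * ψ (n - 1))
    (hW : ∀ n : ℤ, 0 ≤ n → n ≤ N - 1 →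
      W n = Real.exp (γ (n + 1)) * ψ n - Real.exp (-γ n) * ψ (n - 1)) :
    ∀ n : ℤ, 0 ≤ n → n ≤ N - 1 → W n ≤ Real.exp (γ (n + 1)) := by
  intro n hn hnN
  have hγanti : ∀ m, m + 1 ≤ N → γ (m + 1) ≤ γ m := by
    intro m hm
    obtain ⟨hγm, hbm⟩ := hγ m (by omega)
    obtain ⟨hγm1, hbm1⟩ := hγ (m + 1) hm
    have hcosh : cosh (γ (m + 1)) ≤ cosh (γ m) := by linarith [hb m]
    rwa [cosh_le_cosh, abs_of_nonneg hγm1, abs_of_nonneg hγm] at hcosh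
  have hmono : ∀ m, m + 1 ≤ N → exp (-γ m) ≤ exp (-γ (m + 1)) := fun m hm =>
    exp_le_exp.mpr (neg_le_neg (hγanti m hm))
  have hrec' : ∀ m, 0 ≤ m → m < N → ψ (m + 1) = (1 + exp (-γ (m + 1)) ^ 2) * ψ m
      - exp (-γ m) * exp (-γ (m + 1)) * ψ (m - 1) := by
    intro m hm hmN
    rw [hrec m hm hmN, ← exp_add, ← exp_nat_mul]
    ring_nf
  have hbound := sub_mul_le_one_of_threeTermRec (fun m => (exp_pos (-γ m)).le) hmono hψm1 hψ0
    hrec' n hn hnN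
  calc W n = exp (γ (n + 1)) * (ψ n - exp (-γ n) * exp (-γ (n + 1)) * ψ (n - 1)) := by
        rw [hW n hn hnN, exp_neg (γ (n + 1))]
        field_simp
    _ ≤ exp (γ (n + 1)) * 1 := by gcongr
    _ = exp (γ (n + 1)) := mul_one _

theorem stmt_1 (b γ ψ W : ℤ → ℝ) (N : ℤ) (x : ℝ)
    (hb : ∀ n : ℤ, b n ≤ b (n + 1)) (hbneg : ∀ n : ℤ, b n < 0)
    (hx : 0 < x ∧ x < 2)
    (hforb : ∀ n ≤ N, 2 ≤ x - b n)
    (hγ : ∀ n ≤ N, 0 ≤ γ n ∧ x - b n = 2 * Real.cosh (γ n))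
    (hψm1 : ψ (-1) = 0) (hψ0 : ψ 0 = 1)
    (hrec : ∀ n : ℤ, 0 ≤ n → n < N →
      ψ (n + 1) = (1 + Real.exp (-2 * γ (n + 1))) * ψ n
        - Real.exp (-(γ n + γ (n + 1))) * ψ (n - 1))
    (hW : ∀ n : ℤ, 0 ≤ n → n ≤ N - 1 →
      W n = Real.exp (γ (n + 1)) * ψ n - Real.exp (-γ n) * ψ (n - 1)) :
    ∀ n : ℤ, 0 ≤ n → n ≤ N - 1 → W n ≤ Real.exp (γ (n + 1)) :=
  stmt_1_general b γ ψ W N x hb hγ hψm1 hψ0 hrec hW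
end

section
/- Under the same hypotheses ($b_n \le b_{n+1} < 0$, $x - b_n = 2\cosh(\gamma_n) \ge 2$ for $n \le N$, $\psi$ defined by the recursion $\psi_{-1}=0$, $\psi_0=1$, $\psi_{n+1} = (1+e^{-2\gamma_{n+1}})\psi_n - e^{-(\gamma_n+\gamma_{n+1})}\psi_{n-1}$), one has $\psi_{n+1} \le 1 + \psi_n$ for $0 \le n \le N-2$, and consequently $\psi_n \le n+1$ for $0 \le n \le N-1$. -/
/-!
Put `aₙ = e^{-γₙ}`, so the recursion reads `ψₙ₊₁ = (1 + aₙ₊₁²) ψₙ - aₙ aₙ₊₁ ψₙ₋₁`, and `b` nondecreasing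
makes `γ` nonincreasing, i.e. `a` nondecreasing with values in `(0, 1]`. Then `ψ` is nonnegative and
nondecreasing, and the defect `Vₙ = ψₙ - aₙ aₙ₊₁ ψₙ₋₁` (that is `e^{-γₙ₊₁} Wₙ`) satisfies
`Vₙ₊₁ = Vₙ - aₙ₊₁ (aₙ₊₂ - aₙ₊₁) ψₙ ≤ Vₙ`, so `Vₙ ≤ V₀ = 1`. Hence `ψₙ₊₁ = aₙ₊₁² ψₙ + Vₙ ≤ ψₙ + 1`.
-/

open Set

namespace ThreeTermRecurrence

variable {a ψ : ℤ → ℝ} {N : ℤ}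

theorem nonneg_and_le_succ (hψm1 : ψ (-1) = 0) (hψ0 : ψ 0 = 1)
    (hrec : ∀ n, 0 ≤ n → n < N →
      ψ (n + 1) = (1 + a (n + 1) ^ 2) * ψ n - a n * a (n + 1) * ψ (n - 1))
    (ha : ∀ n ∈ Icc 0 N, a n ∈ Icc 0 1) (ha_mono : MonotoneOn a (Icc 0 N)) :
    ∀ n, 0 ≤ n → n ≤ N → 0 ≤ ψ (n - 1) ∧ ψ (n - 1) ≤ ψ n := by
  intro n hn
  induction n, hn using Int.leInduction with
  | base => simp [hψm1, hψ0]
  | succ n hn ih =>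
    intro hnN
    obtain ⟨hprev, hmono⟩ := ih (by omega)
    have han : 0 ≤ a n := (ha n ⟨hn, by omega⟩).1
    have ha_le : a n ≤ a (n + 1) := ha_mono ⟨hn, by omega⟩ ⟨by omega, hnN⟩ (by omega)
    have hψ : 0 ≤ ψ n := hprev.trans hmono
    -- `ψₙ₊₁ - ψₙ = aₙ₊₁ (aₙ₊₁ ψₙ - aₙ ψₙ₋₁) ≥ aₙ₊₁ aₙ (ψₙ - ψₙ₋₁)`
    have hinc : a n * (ψ n - ψ (n - 1)) ≤ a (n + 1) * ψ n - a n * ψ (n - 1) := by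
      nlinarith [mul_le_mul_of_nonneg_right ha_le hψ]
    have hstep : 0 ≤ ψ (n + 1) - ψ n := by
      rw [hrec n hn (by omega)]
      nlinarith [mul_nonneg (han.trans ha_le) (mul_nonneg han (sub_nonneg.2 hmono))]
    rw [add_sub_cancel_right]
    exact ⟨hψ, by linarith⟩

theorem nonneg (hψm1 : ψ (-1) = 0) (hψ0 : ψ 0 = 1)
    (hrec : ∀ n, 0 ≤ n → n < N →
      ψ (n + 1) = (1 + a (n + 1) ^ 2) * ψ n - a n * a (n + 1) * ψ (n - 1))
    (ha : ∀ n ∈ Icc 0 N, a n ∈ Icc 0 1) (ha_mono : MonotoneOn a (Icc 0 N)) :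
    ∀ n, 0 ≤ n → n < N → 0 ≤ ψ n := fun n hn hnN ↦ by
  simpa using (nonneg_and_le_succ hψm1 hψ0 hrec ha ha_mono (n + 1) (by omega) hnN).1

theorem defect_le_one (hψm1 : ψ (-1) = 0) (hψ0 : ψ 0 = 1)
    (hrec : ∀ n, 0 ≤ n → n < N →
      ψ (n + 1) = (1 + a (n + 1) ^ 2) * ψ n - a n * a (n + 1) * ψ (n - 1))
    (ha : ∀ n ∈ Icc 0 N, a n ∈ Icc 0 1) (ha_mono : MonotoneOn a (Icc 0 N)) :
    ∀ n, 0 ≤ n → n < N → ψ n - a n * a (n + 1) * ψ (n - 1) ≤ 1 := by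
  intro n hn
  induction n, hn using Int.leInduction with
  | base => simp [hψm1, hψ0]
  | succ n hn ih =>
    intro hnN
    have hψ := nonneg hψm1 hψ0 hrec ha ha_mono n hn (by omega)
    have ha1 : 0 ≤ a (n + 1) := (ha (n + 1) ⟨by omega, hnN.le⟩).1
    have ha_le : a (n + 1) ≤ a (n + 1 + 1) :=
      ha_mono ⟨by omega, by omega⟩ ⟨by omega, hnN⟩ (by omega)
    have hV : ψ (n + 1) - a (n + 1) * a (n + 1 + 1) * ψ (n + 1 - 1)
        = ψ n - a n * a (n + 1) * ψ (n - 1) - a (n + 1) * (a (n + 1 + 1) - a (n + 1)) * ψ n := by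
      rw [hrec n hn (by omega), add_sub_cancel_right]; ring
    rw [hV]
    nlinarith [mul_nonneg (mul_nonneg ha1 (sub_nonneg.2 ha_le)) hψ, ih (by omega)]

theorem succ_le_one_add (hψm1 : ψ (-1) = 0) (hψ0 : ψ 0 = 1)
    (hrec : ∀ n, 0 ≤ n → n < N →
      ψ (n + 1) = (1 + a (n + 1) ^ 2) * ψ n - a n * a (n + 1) * ψ (n - 1))
    (ha : ∀ n ∈ Icc 0 N, a n ∈ Icc 0 1) (ha_mono : MonotoneOn a (Icc 0 N)) :
    ∀ n, 0 ≤ n → n ≤ N - 2 → ψ (n + 1) ≤ 1 + ψ n := by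
  intro n hn hnN
  have hψ := nonneg hψm1 hψ0 hrec ha ha_mono n hn (by omega)
  obtain ⟨ha0, ha1⟩ := ha (n + 1) ⟨by omega, by omega⟩
  have hsq : a (n + 1) ^ 2 * ψ n ≤ ψ n :=
    mul_le_of_le_one_left hψ (pow_le_one₀ ha0 ha1)
  have hV := defect_le_one hψm1 hψ0 hrec ha ha_mono n hn (by omega)
  rw [hrec n hn (by omega)]
  linarith

theorem le_add_one (hψm1 : ψ (-1) = 0) (hψ0 : ψ 0 = 1)
    (hrec : ∀ n, 0 ≤ n → n < N →
      ψ (n + 1) = (1 + a (n + 1) ^ 2) * ψ n - a n * a (n + 1) * ψ (n - 1))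
    (ha : ∀ n ∈ Icc 0 N, a n ∈ Icc 0 1) (ha_mono : MonotoneOn a (Icc 0 N)) :
    ∀ n, 0 ≤ n → n ≤ N - 1 → ψ n ≤ n + 1 := by
  intro n hn
  induction n, hn using Int.leInduction with
  | base => simp [hψ0]
  | succ n hn ih =>
    intro hnN
    have := succ_le_one_add hψm1 hψ0 hrec ha ha_mono n hn (by omega)
    push_cast
    linarith [ih (by omega)]

end ThreeTermRecurrence

theorem antitoneOn_of_cosh_eq {b γ : ℤ → ℝ} {N : ℤ} {x : ℝ} (hb : Monotone b)
    (hγ : ∀ n ≤ N, 0 ≤ γ n ∧ x - b n = 2 * Real.cosh (γ n)) : AntitoneOn γ (Iic N) := by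
  intro m hm n hn hmn
  obtain ⟨hγm, hm⟩ := hγ m hm
  obtain ⟨hγn, hn⟩ := hγ n hn
  have hcosh : Real.cosh (γ n) ≤ Real.cosh (γ m) := by linarith [hb hmn]
  rwa [Real.cosh_le_cosh, abs_of_nonneg hγn, abs_of_nonneg hγm] at hcosh

theorem stmt_2_general (b γ ψ : ℤ → ℝ) (N : ℤ) (x : ℝ)
    (hb : ∀ n : ℤ, b n ≤ b (n + 1))
    (hγ : ∀ n ≤ N, 0 ≤ γ n ∧ x - b n = 2 * Real.cosh (γ n))
    (hψm1 : ψ (-1) = 0) (hψ0 : ψ 0 = 1)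
    (hrec : ∀ n : ℤ, 0 ≤ n → n < N →
      ψ (n + 1) = (1 + Real.exp (-2 * γ (n + 1))) * ψ n
        - Real.exp (-(γ n + γ (n + 1))) * ψ (n - 1)) :
    (∀ n : ℤ, 0 ≤ n → n ≤ N - 2 → ψ (n + 1) ≤ 1 + ψ n) ∧
    (∀ n : ℤ, 0 ≤ n → n ≤ N - 1 → ψ n ≤ n + 1) := by
  set a : ℤ → ℝ := fun n ↦ Real.exp (-γ n)
  have hrec' : ∀ n, 0 ≤ n → n < N →
      ψ (n + 1) = (1 + a (n + 1) ^ 2) * ψ n - a n * a (n + 1) * ψ (n - 1) := by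
    intro n hn hnN
    rw [hrec n hn hnN, ← Real.exp_nat_mul, ← Real.exp_add]
    ring_nf
  have ha : ∀ n ∈ Icc 0 N, a n ∈ Icc 0 1 := fun n hn ↦
    ⟨(Real.exp_pos _).le, Real.exp_le_one_iff.2 (neg_nonpos.2 (hγ n hn.2).1)⟩
  have ha_mono : MonotoneOn a (Icc 0 N) := fun m hm n hn hmn ↦
    Real.exp_le_exp.2 (neg_le_neg (antitoneOn_of_cosh_eq (monotone_int_of_le_succ hb) hγ
      hm.2 hn.2 hmn))
  exact ⟨ThreeTermRecurrence.succ_le_one_add hψm1 hψ0 hrec' ha ha_mono,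
    ThreeTermRecurrence.le_add_one hψm1 hψ0 hrec' ha ha_mono⟩

theorem stmt_2 (b γ ψ : ℤ → ℝ) (N : ℤ) (x : ℝ)
    (hb : ∀ n : ℤ, b n ≤ b (n + 1)) (hbneg : ∀ n : ℤ, b n < 0)
    (hx : 0 < x ∧ x < 2)
    (hforb : ∀ n ≤ N, 2 ≤ x - b n)
    (hγ : ∀ n ≤ N, 0 ≤ γ n ∧ x - b n = 2 * Real.cosh (γ n))
    (hψm1 : ψ (-1) = 0) (hψ0 : ψ 0 = 1)
    (hrec : ∀ n : ℤ, 0 ≤ n → n < N →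
      ψ (n + 1) = (1 + Real.exp (-2 * γ (n + 1))) * ψ n
        - Real.exp (-(γ n + γ (n + 1))) * ψ (n - 1)) :
    (∀ n : ℤ, 0 ≤ n → n ≤ N - 2 → ψ (n + 1) ≤ 1 + ψ n) ∧
    (∀ n : ℤ, 0 ≤ n → n ≤ N - 1 → ψ n ≤ n + 1) :=
  stmt_2_general b γ ψ N x hb hγ hψm1 hψ0 hrec
end

section
/- Let $a_n \equiv 1$, $b_n \le b_{n+1} < 0$, and let $x \in (0,2)$. Let $p_n(x)$ be the orthonormal polynomials satisfying $p_{-1}=0$, $p_0=1$, $p_{n+1}(x) = (x - b_{n+1})p_n(x) - p_{n-1}(x)$. If $x - b_n \ge 2$ for all $n \le N$ and $\gamma_n \ge 0$ is defined by $x - b_n = 2\cosh(\gamma_n)$, then for $1 \le n < N$: $e^{\sum_{j=1}^n \gamma_j} \le p_n(x) \le (n+1) e^{\sum_{j=1}^n \gamma_j}$. -/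
/-! Writing `2 cosh γₙ = e^{γₙ} + e^{-γₙ}`, the recurrence factors as
`p_{n+1} - e^{±γ_{n+1}} pₙ = e^{∓γ_{n+1}} (pₙ - e^{±γ_{n+1}} p_{n-1})`.
Since `γ` decreases, the `+` form propagates `pₙ ≥ e^{γₙ} p_{n-1} ≥ 0`, which gives the lower
bound, and the `-` form propagates `pₙ - e^{-γₙ} p_{n-1} ≤ e^{γ₁ + ⋯ + γₙ}`. As `e^{-γₙ} ≤ 1`,
the latter gives `pₙ ≤ p_{n-1} + e^{γ₁ + ⋯ + γₙ}`, which sums to the upper bound. -/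

open Finset Real

lemma sum_Icc_one_add_one {M : Type*} [AddCommMonoid M] (f : ℤ → M) {n : ℤ} (hn : 0 ≤ n) :
    ∑ j ∈ Icc 1 (n + 1), f j = ∑ j ∈ Icc 1 n, f j + f (n + 1) := by
  rw [← insert_Icc_right_eq_Icc_add_one (by omega), sum_insert (by simp), add_comm]

lemma two_mul_cosh (t : ℝ) : 2 * cosh t = exp t + exp (-t) := by
  rw [cosh_eq]; ring

lemma sub_exp_mul_eq_of_eq_exp_add_exp_neg {u v w t : ℝ} (h : w = (exp t + exp (-t)) * v - u) :
    w - exp t * v = exp (-t) * (v - exp t * u) := by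
  have : exp (-t) * exp t = 1 := by rw [← exp_add, neg_add_cancel, exp_zero]
  linear_combination h + u * this

lemma le_of_sub_eq_two_mul_cosh_s3 {b γ : ℤ → ℝ} {x : ℝ} {m n : ℤ} (hb : b m ≤ b n)
    (hγm : 0 ≤ γ m) (hγn : 0 ≤ γ n)
    (hm : x - b m = 2 * cosh (γ m)) (hn : x - b n = 2 * cosh (γ n)) :
    γ n ≤ γ m := by
  have : cosh (γ n) ≤ cosh (γ m) := by linarith
  rwa [cosh_le_cosh, abs_of_nonneg hγm, abs_of_nonneg hγn] at this

section CoshRecurrence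

variable {γ p : ℤ → ℝ} {N : ℤ}

lemma exp_mul_le_of_cosh_rec (hpm1 : p (-1) = 0) (hp0 : p 0 = 1)
    (hrec : ∀ n, 0 ≤ n → n + 1 ≤ N → p (n + 1) = 2 * cosh (γ (n + 1)) * p n - p (n - 1))
    (hanti : ∀ n, 1 ≤ n → n + 1 ≤ N → γ (n + 1) ≤ γ n) :
    ∀ n, 1 ≤ n → n ≤ N → 0 ≤ p (n - 1) ∧ exp (γ n) * p (n - 1) ≤ p n := by
  intro n hn
  induction n, hn using Int.leInduction with
  | base =>
    intro hN
    have hp1 : p 1 = exp (γ 1) + exp (-γ 1) := by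
      simpa [hpm1, hp0, two_mul_cosh] using hrec 0 le_rfl hN
    norm_num [hp0, hp1, (exp_pos _).le]
  | succ n hn ih =>
    intro hN
    obtain ⟨hpn1, hratio⟩ := ih (by omega)
    rw [add_sub_cancel_right]
    have hpn : 0 ≤ p n := (mul_nonneg (exp_pos _).le hpn1).trans hratio
    have hexp : exp (γ (n + 1)) ≤ exp (γ n) := exp_le_exp.mpr (hanti n hn hN)
    have hfactor := sub_exp_mul_eq_of_eq_exp_add_exp_neg
      ((hrec n (by omega) hN).trans (by rw [two_mul_cosh]))
    refine ⟨hpn, sub_nonneg.mp ?_⟩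
    rw [hfactor]
    exact mul_nonneg (exp_pos _).le (by nlinarith)

lemma exp_sum_le_of_cosh_rec (hpm1 : p (-1) = 0) (hp0 : p 0 = 1)
    (hrec : ∀ n, 0 ≤ n → n + 1 ≤ N → p (n + 1) = 2 * cosh (γ (n + 1)) * p n - p (n - 1))
    (hanti : ∀ n, 1 ≤ n → n + 1 ≤ N → γ (n + 1) ≤ γ n) :
    ∀ n, 0 ≤ n → n ≤ N → exp (∑ j ∈ Icc 1 n, γ j) ≤ p n := by
  intro n hn
  induction n, hn using Int.leInduction with
  | base => simp [hp0]
  | succ n hn ih =>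
    intro hN
    have hratio := (exp_mul_le_of_cosh_rec hpm1 hp0 hrec hanti (n + 1) (by omega) hN).2
    rw [add_sub_cancel_right] at hratio
    calc exp (∑ j ∈ Icc 1 (n + 1), γ j)
        = exp (γ (n + 1)) * exp (∑ j ∈ Icc 1 n, γ j) := by
          rw [sum_Icc_one_add_one _ hn, exp_add, mul_comm]
      _ ≤ exp (γ (n + 1)) * p n := by gcongr; exact ih (by omega)
      _ ≤ p (n + 1) := hratio

lemma sub_exp_neg_mul_le_of_cosh_rec (hpm1 : p (-1) = 0) (hp0 : p 0 = 1)
    (hrec : ∀ n, 0 ≤ n → n + 1 ≤ N → p (n + 1) = 2 * cosh (γ (n + 1)) * p n - p (n - 1))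
    (hanti : ∀ n, 1 ≤ n → n + 1 ≤ N → γ (n + 1) ≤ γ n) :
    ∀ n, 1 ≤ n → n ≤ N → p n - exp (-γ n) * p (n - 1) ≤ exp (∑ j ∈ Icc 1 n, γ j) := by
  intro n hn
  induction n, hn using Int.leInduction with
  | base =>
    intro hN
    have hp1 : p 1 = exp (γ 1) + exp (-γ 1) := by
      simpa [hpm1, hp0, two_mul_cosh] using hrec 0 le_rfl hN
    simp [hp0, hp1]
  | succ n hn ih =>
    intro hN
    have hpn1 := (exp_mul_le_of_cosh_rec hpm1 hp0 hrec hanti n hn (by omega)).1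
    have hexp : exp (-γ n) ≤ exp (-γ (n + 1)) := exp_le_exp.mpr (by linarith [hanti n hn hN])
    have hfactor := sub_exp_mul_eq_of_eq_exp_add_exp_neg (t := -γ (n + 1))
      ((hrec n (by omega) hN).trans (by rw [two_mul_cosh, neg_neg, add_comm]))
    rw [add_sub_cancel_right, hfactor, neg_neg, sum_Icc_one_add_one _ (by omega), exp_add,
      mul_comm (exp _)]
    gcongr
    nlinarith [ih (by omega)]

lemma le_mul_exp_sum_of_cosh_rec (hpm1 : p (-1) = 0) (hp0 : p 0 = 1)
    (hrec : ∀ n, 0 ≤ n → n + 1 ≤ N → p (n + 1) = 2 * cosh (γ (n + 1)) * p n - p (n - 1))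
    (hanti : ∀ n, 1 ≤ n → n + 1 ≤ N → γ (n + 1) ≤ γ n)
    (hnonneg : ∀ n, 1 ≤ n → n ≤ N → 0 ≤ γ n) :
    ∀ n, 0 ≤ n → n ≤ N → p n ≤ (n + 1) * exp (∑ j ∈ Icc 1 n, γ j) := by
  intro n hn
  induction n, hn using Int.leInduction with
  | base => simp [hp0]
  | succ n hn ih =>
    intro hN
    have hpn := (exp_mul_le_of_cosh_rec hpm1 hp0 hrec hanti (n + 1) (by omega) hN).1
    have hdefect := sub_exp_neg_mul_le_of_cosh_rec hpm1 hp0 hrec hanti (n + 1) (by omega) hN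
    rw [add_sub_cancel_right] at hpn hdefect
    have hγ := hnonneg (n + 1) (by omega) hN
    have hexp : exp (-γ (n + 1)) ≤ 1 := exp_le_one_iff.mpr (by linarith)
    have hsum : exp (∑ j ∈ Icc 1 n, γ j) ≤ exp (∑ j ∈ Icc 1 (n + 1), γ j) := by
      rw [sum_Icc_one_add_one _ hn]; gcongr; linarith
    have hn' : (0 : ℝ) ≤ n + 1 := by exact_mod_cast (by omega : (0 : ℤ) ≤ n + 1)
    calc p (n + 1) ≤ p n + exp (∑ j ∈ Icc 1 (n + 1), γ j) := by nlinarith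
      _ ≤ (n + 1) * exp (∑ j ∈ Icc 1 (n + 1), γ j) + exp (∑ j ∈ Icc 1 (n + 1), γ j) := by
        gcongr; exact (ih (by omega)).trans (by gcongr)
      _ = ((n + 1 : ℤ) + 1 : ℝ) * exp (∑ j ∈ Icc 1 (n + 1), γ j) := by push_cast; ring

end CoshRecurrence

theorem stmt_3_general (b γ p : ℤ → ℝ) (N : ℤ) (x : ℝ)
    (hb : ∀ n : ℤ, b n ≤ b (n + 1))
    (hγ : ∀ n ≤ N, 0 ≤ γ n ∧ x - b n = 2 * Real.cosh (γ n))
    (hpm1 : p (-1) = 0) (hp0 : p 0 = 1)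
    (hrec : ∀ n : ℤ, 0 ≤ n → p (n + 1) = (x - b (n + 1)) * p n - p (n - 1)) :
    ∀ n : ℤ, 1 ≤ n → n < N →
      Real.exp (∑ j ∈ Finset.Icc 1 n, γ j) ≤ p n ∧
      p n ≤ (n + 1) * Real.exp (∑ j ∈ Finset.Icc 1 n, γ j) := by
  have hrec' : ∀ n, 0 ≤ n → n + 1 ≤ N →
      p (n + 1) = 2 * cosh (γ (n + 1)) * p n - p (n - 1) := fun n hn hN ↦ by
    rw [hrec n hn, (hγ (n + 1) hN).2]
  have hanti : ∀ n, 1 ≤ n → n + 1 ≤ N → γ (n + 1) ≤ γ n := fun n _ hN ↦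
    le_of_sub_eq_two_mul_cosh_s3 (hb n) (hγ n (by omega)).1 (hγ (n + 1) hN).1
      (hγ n (by omega)).2 (hγ (n + 1) hN).2
  intro n hn hnN
  exact ⟨exp_sum_le_of_cosh_rec hpm1 hp0 hrec' hanti n (by omega) hnN.le,
    le_mul_exp_sum_of_cosh_rec hpm1 hp0 hrec' hanti (fun m _ hm ↦ (hγ m hm).1) n (by omega)
      hnN.le⟩

theorem stmt_3 (b γ p : ℤ → ℝ) (N : ℤ) (x : ℝ)
    (hb : ∀ n : ℤ, b n ≤ b (n + 1)) (hbneg : ∀ n : ℤ, b n < 0)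
    (hx : 0 < x ∧ x < 2)
    (hforb : ∀ n ≤ N, 2 ≤ x - b n)
    (hγ : ∀ n ≤ N, 0 ≤ γ n ∧ x - b n = 2 * Real.cosh (γ n))
    (hpm1 : p (-1) = 0) (hp0 : p 0 = 1)
    (hrec : ∀ n : ℤ, 0 ≤ n → p (n + 1) = (x - b (n + 1)) * p n - p (n - 1)) :
    ∀ n : ℤ, 1 ≤ n → n < N →
      Real.exp (∑ j ∈ Finset.Icc 1 n, γ j) ≤ p n ∧
      p n ≤ (n + 1) * Real.exp (∑ j ∈ Finset.Icc 1 n, γ j) :=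
  stmt_3_general b γ p N x hb hγ hpm1 hp0 hrec
end

section
/- For $\kappa, \kappa' \in (0, \pi/2)$, let $Y(\kappa)$ be the $2\times 2$ complex matrix with rows $(1, 1)$ and $(e^{-i\kappa}, e^{i\kappa})$. Then the operator norm satisfies $\|Y(\kappa')^{-1} Y(\kappa)\| \le 1 + \frac{|e^{i\kappa'} - e^{i\kappa}|}{\sin(\kappa')}$. -/
/-!
With `x = e^{-iκ}`, `y = e^{iκ}` and primes for `κ'`, one has
`Y(κ')⁻¹ Y(κ) = 1 + (y' - x')⁻¹ F` with `F = !![x' - x, y' - y; x - x', y - y']`.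
On the unit circle `x = conj y`, so every entry of `F` has modulus `|y' - y|`, while
`|y' - x'| = 2 sin κ'`. The operator norm is bounded by the Frobenius norm, hence by twice the
largest entry of a `2 × 2` matrix, which gives the bound.
-/

namespace Matrix

section Field

variable {K : Type*} [Field K]

lemma inv_of_ones_row (x y : K) :
    (!![1, 1; x, y])⁻¹ = (y - x)⁻¹ • !![y, -1; -x, 1] := by
  rw [inv_def, det_fin_two_of, adjugate_fin_two_of, Ring.inverse_eq_inv', one_mul, one_mul]

lemma inv_mul_of_ones_row {x' y' : K} (x y : K) (h : x' ≠ y') :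
    (!![1, 1; x', y'])⁻¹ * !![1, 1; x, y] =
      1 + (y' - x')⁻¹ • !![x' - x, y' - y; x - x', y - y'] := by
  have hdet : y' - x' ≠ 0 := sub_ne_zero.2 h.symm
  have hadj : !![y', -1; -x', 1] * !![1, 1; x, y] =
      (y' - x') • 1 + !![x' - x, y' - y; x - x', y - y'] := by
    rw [mul_fin_two, one_fin_two, smul_of, of_add_of]
    congr 1
    simp only [smul_cons, smul_eq_mul, smul_empty, cons_add_cons, empty_add_empty]
    ring_nf
  rw [inv_of_ones_row, smul_mul, hadj, smul_add, smul_smul, inv_mul_cancel₀ hdet, one_smul]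

end Field

section EuclideanNorm

variable {𝕜 n : Type*} [RCLike 𝕜] [Fintype n]

lemma norm_mulVec_apply_sq_le (A : Matrix n n 𝕜) (x : n → 𝕜) (i : n) :
    ‖(A *ᵥ x) i‖ ^ 2 ≤ (∑ j, ‖A i j‖ ^ 2) * ∑ j, ‖x j‖ ^ 2 :=
  calc ‖(A *ᵥ x) i‖ ^ 2 ≤ (∑ j, ‖A i j‖ * ‖x j‖) ^ 2 := by
        gcongr
        exact (norm_sum_le _ _).trans_eq (by simp only [norm_mul])
    _ ≤ (∑ j, ‖A i j‖ ^ 2) * ∑ j, ‖x j‖ ^ 2 := Finset.sum_mul_sq_le_sq_mul_sq _ _ _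

variable [DecidableEq n]

lemma norm_toEuclideanCLM_le_sqrt_sum_sq (A : Matrix n n 𝕜) :
    ‖toEuclideanCLM (𝕜 := 𝕜) A‖ ≤ √(∑ i, ∑ j, ‖A i j‖ ^ 2) := by
  refine ContinuousLinearMap.opNorm_le_bound _ (Real.sqrt_nonneg _) fun x ↦ ?_
  rw [EuclideanSpace.norm_eq, EuclideanSpace.norm_eq, ← Real.sqrt_mul (by positivity),
    Finset.sum_mul]
  gcongr with i
  rw [ofLp_toEuclideanCLM]
  exact norm_mulVec_apply_sq_le A x.ofLp i

lemma norm_toEuclideanCLM_le_card_mul {A : Matrix n n 𝕜} {c : ℝ} (hc : 0 ≤ c)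
    (hA : ∀ i j, ‖A i j‖ ≤ c) :
    ‖toEuclideanCLM (𝕜 := 𝕜) A‖ ≤ Fintype.card n * c := by
  refine (norm_toEuclideanCLM_le_sqrt_sum_sq A).trans (Real.sqrt_le_iff.2 ⟨by positivity, ?_⟩)
  calc ∑ i, ∑ j, ‖A i j‖ ^ 2 ≤ ∑ _i : n, ∑ _j : n, c ^ 2 := by
        gcongr with i _ j
        exact hA i j
    _ = (Fintype.card n * c) ^ 2 := by
      simp only [Finset.sum_const, Finset.card_univ, nsmul_eq_mul]
      ring

lemma norm_toEuclideanCLM_one_add_le (A : Matrix n n 𝕜) :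
    ‖toEuclideanCLM (n := n) (𝕜 := 𝕜) (1 + A)‖ ≤ 1 + ‖toEuclideanCLM (𝕜 := 𝕜) A‖ := by
  rw [map_add, map_one]
  exact (norm_add_le _ _).trans
    (add_le_add_left (ContinuousLinearMap.norm_id_le (𝕜 := 𝕜) (E := EuclideanSpace 𝕜 n)) _)

lemma norm_toEuclideanCLM_inv_mul_of_ones_row_le {x y x' y' : 𝕜} (h : x' ≠ y')
    (hx : ‖x' - x‖ = ‖y' - y‖) :
    ‖toEuclideanCLM (𝕜 := 𝕜) ((!![1, 1; x', y'])⁻¹ * !![1, 1; x, y])‖ ≤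
      1 + 2 * (‖y' - y‖ / ‖y' - x'‖) := by
  rw [inv_mul_of_ones_row x y h]
  refine (norm_toEuclideanCLM_one_add_le _).trans ?_
  gcongr
  have hF : ∀ i j, ‖!![x' - x, y' - y; x - x', y - y'] i j‖ = ‖y' - y‖ := by
    intro i j
    fin_cases i <;> fin_cases j
    exacts [hx, rfl, (norm_sub_rev _ _).trans hx, norm_sub_rev _ _]
  have hentry : ∀ i j, ‖((y' - x')⁻¹ • !![x' - x, y' - y; x - x', y - y']) i j‖ ≤
      ‖y' - y‖ / ‖y' - x'‖ := fun i j ↦ by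
    rw [smul_apply, smul_eq_mul, norm_mul, norm_inv, hF, inv_mul_eq_div]
  simpa only [Fintype.card_fin, Nat.cast_ofNat] using
    norm_toEuclideanCLM_le_card_mul (by positivity) hentry

end EuclideanNorm

end Matrix

namespace Complex

open ComplexConjugate

lemma exp_mul_I_sub_exp_neg_mul_I (t : ℝ) :
    exp (t * I) - exp (-t * I) = 2 * Real.sin t * I := by
  rw [exp_mul_I, exp_mul_I, cos_neg, sin_neg, ofReal_sin]
  ring

lemma norm_exp_neg_mul_I_sub (s t : ℝ) :
    ‖exp (-s * I) - exp (-t * I)‖ = ‖exp (s * I) - exp (t * I)‖ := by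
  have hconj (r : ℝ) : exp (-r * I) = conj (exp (r * I)) := by
    rw [← exp_conj, map_mul, conj_ofReal, conj_I, mul_neg, neg_mul]
  rw [hconj, hconj, ← map_sub, norm_conj]

end Complex

theorem stmt_4_general (κ κ' : ℝ)
    (hκ' : κ' ∈ Set.Ioo 0 (Real.pi / 2))
    (Y : ℝ → Matrix (Fin 2) (Fin 2) ℂ)
    (hY : ∀ t : ℝ, Y t =
      !![1, 1; Complex.exp (-(t : ℂ) * Complex.I), Complex.exp ((t : ℂ) * Complex.I)]) :
    ‖Matrix.toEuclideanCLM (𝕜 := ℂ) ((Y κ')⁻¹ * Y κ)‖ ≤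
      1 + ‖Complex.exp ((κ' : ℂ) * Complex.I) - Complex.exp ((κ : ℂ) * Complex.I)‖
        / Real.sin κ' := by
  have hsin : 0 < Real.sin κ' :=
    Real.sin_pos_of_pos_of_lt_pi hκ'.1 (hκ'.2.trans (by linarith [Real.pi_pos]))
  have hgap : ‖Complex.exp ((κ' : ℂ) * Complex.I) - Complex.exp (-(κ' : ℂ) * Complex.I)‖ =
      2 * Real.sin κ' := by
    rw [Complex.exp_mul_I_sub_exp_neg_mul_I, norm_mul, norm_mul, Complex.norm_I,
      Complex.norm_real, Real.norm_of_nonneg hsin.le]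
    norm_num
  have hne : Complex.exp (-(κ' : ℂ) * Complex.I) ≠ Complex.exp ((κ' : ℂ) * Complex.I) := by
    rw [ne_comm, ← sub_ne_zero, ← norm_ne_zero_iff, hgap]
    positivity
  rw [hY, hY]
  refine (Matrix.norm_toEuclideanCLM_inv_mul_of_ones_row_le hne
    (Complex.norm_exp_neg_mul_I_sub κ' κ)).trans_eq ?_
  rw [hgap]
  field_simp

theorem stmt_4 (κ κ' : ℝ) (hκ : κ ∈ Set.Ioo 0 (Real.pi / 2))
    (hκ' : κ' ∈ Set.Ioo 0 (Real.pi / 2))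
    (Y : ℝ → Matrix (Fin 2) (Fin 2) ℂ)
    (hY : ∀ t : ℝ, Y t =
      !![1, 1; Complex.exp (-(t : ℂ) * Complex.I), Complex.exp ((t : ℂ) * Complex.I)]) :
    ‖Matrix.toEuclideanCLM (𝕜 := ℂ) ((Y κ')⁻¹ * Y κ)‖ ≤
      1 + ‖Complex.exp ((κ' : ℂ) * Complex.I) - Complex.exp ((κ : ℂ) * Complex.I)‖
        / Real.sin κ' :=
  stmt_4_general κ κ' hκ' Y hY
end

section
/- Let $b_n \le b_{n+1} < 0$ with $b_n \to 0$, $x \in (0,2)$, and suppose $x - b_n < 2$ for all $n > N$. Define $\kappa_n \in [0, \pi/2)$ for $n > N$ by $x - b_n = 2\cos\kappa_n$, and $\kappa_\infty = \arccos(x/2)$. Let $p_n$ satisfy $p_{n+1} = (x - b_{n+1})p_n - p_{n-1}$ and set $\Phi_n = p_n - e^{-i\kappa_n} p_{n-1}$. Then for $n > N$: $|\Phi_{n+1}| \le (1 + \frac{\kappa_{n+1}-\kappa_n}{\sin\kappa_n})|\Phi_n|$ and $|\Phi_{n+1}| \ge (1 - \frac{\kappa_{n+1}-\kappa_n}{\sin\kappa_n})|\Phi_n|$.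 -/
/-!
Since `2 cos κ' = e^{iκ'} + e^{-iκ'}`, the recursion gives
`Φ_{n+1} = e^{iκ_{n+1}} (Φ_n + (e^{-iκ_n} - e^{-iκ_{n+1}}) p_{n-1})`. The correction term has
modulus at most `(κ_{n+1} - κ_n) |p_{n-1}|`, and because `p_{n-1}` is real,
`sin κ_n · |p_{n-1}| = |Im Φ_n| ≤ |Φ_n|`. Both bounds are then the triangle inequality.
-/

open Complex

lemma norm_exp_neg_mul_I_sub_exp_neg_mul_I_le (a c : ℝ) :
    ‖exp (-(a : ℂ) * I) - exp (-(c : ℂ) * I)‖ ≤ |c - a| := by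
  have hfactor : exp (-(a : ℂ) * I) - exp (-(c : ℂ) * I) =
      exp ((-c : ℝ) * I) * (exp (I * (c - a : ℝ)) - 1) := by
    rw [mul_sub, mul_one, ← exp_add]
    push_cast
    ring_nf
  rw [hfactor, norm_mul, norm_exp_ofReal_mul_I, one_mul]
  exact Real.norm_exp_I_mul_ofReal_sub_one_le

-- The paper's `Φ_n` is `phasor κ_n p_n p_{n-1}`.
noncomputable def phasor (κ u v : ℝ) : ℂ := (u : ℂ) - exp (-(κ : ℂ) * I) * v

lemma sin_mul_abs_le_norm_phasor {κ : ℝ} (hκ : 0 ≤ Real.sin κ) (u v : ℝ) :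
    Real.sin κ * |v| ≤ ‖phasor κ u v‖ := by
  have hexp : (exp (-(κ : ℂ) * I)).im = -Real.sin κ := by
    simpa using exp_ofReal_mul_I_im (-κ)
  have him : (phasor κ u v).im = Real.sin κ * v := by
    simp only [phasor, sub_im, ofReal_im, mul_im, hexp, ofReal_re]
    ring
  calc Real.sin κ * |v| = |(phasor κ u v).im| := by rw [him, abs_mul, abs_of_nonneg hκ]
    _ ≤ ‖phasor κ u v‖ := abs_im_le_norm _

lemma phasor_step (κ κ' u v : ℝ) :
    phasor κ' (2 * Real.cos κ' * u - v) u =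
      exp ((κ' : ℂ) * I) *
        (phasor κ u v + (exp (-(κ : ℂ) * I) - exp (-(κ' : ℂ) * I)) * v) := by
  have hinv : exp ((κ' : ℂ) * I) * exp (-(κ' : ℂ) * I) = 1 := by
    rw [← exp_add, neg_mul, add_neg_cancel, exp_zero]
  have hcos : 2 * cos κ' = exp ((κ' : ℂ) * I) + exp (-(κ' : ℂ) * I) := by
    rw [cos, neg_mul]
    ring
  simp only [phasor]
  push_cast
  linear_combination (u : ℂ) * hcos + (v : ℂ) * hinv

lemma norm_add_bounds_of_norm_le_mul {E : Type*} [SeminormedAddCommGroup E] {x y : E} {ε : ℝ}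
    (h : ‖y‖ ≤ ε * ‖x‖) :
    ‖x + y‖ ≤ (1 + ε) * ‖x‖ ∧ (1 - ε) * ‖x‖ ≤ ‖x + y‖ := by
  have hrev : ‖x‖ ≤ ‖x + y‖ + ‖y‖ := by simpa using norm_sub_le (x + y) y
  constructor
  · linarith [norm_add_le x y]
  · linarith

lemma norm_phasor_step_bounds {κ κ' : ℝ} (hsin : 0 < Real.sin κ) (hle : κ ≤ κ') (u v : ℝ) :
    ‖phasor κ' (2 * Real.cos κ' * u - v) u‖ ≤ (1 + (κ' - κ) / Real.sin κ) * ‖phasor κ u v‖ ∧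
      (1 - (κ' - κ) / Real.sin κ) * ‖phasor κ u v‖ ≤ ‖phasor κ' (2 * Real.cos κ' * u - v) u‖ := by
  rw [phasor_step κ, norm_mul, norm_exp_ofReal_mul_I, one_mul]
  apply norm_add_bounds_of_norm_le_mul
  calc ‖(exp (-(κ : ℂ) * I) - exp (-(κ' : ℂ) * I)) * v‖
      = ‖exp (-(κ : ℂ) * I) - exp (-(κ' : ℂ) * I)‖ * |v| := by
        rw [norm_mul, norm_real, Real.norm_eq_abs]
    _ ≤ (κ' - κ) * |v| := by
      gcongr
      simpa [abs_of_nonneg (sub_nonneg.2 hle)] using norm_exp_neg_mul_I_sub_exp_neg_mul_I_le κ κ'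
    _ = (κ' - κ) / Real.sin κ * (Real.sin κ * |v|) := by field_simp
    _ ≤ (κ' - κ) / Real.sin κ * ‖phasor κ u v‖ := by
      gcongr
      exact sin_mul_abs_le_norm_phasor hsin.le u v

theorem stmt_8_general (b κ p : ℤ → ℝ) (Φ : ℤ → ℂ) (N : ℤ) (x : ℝ)
    (hb : ∀ n : ℤ, b n ≤ b (n + 1))
    (hosc : ∀ n > N, x - b n < 2)
    (hκ : ∀ n > N, 0 ≤ κ n ∧ κ n < Real.pi / 2 ∧ x - b n = 2 * Real.cos (κ n))
    (hrec : ∀ n : ℤ, p (n + 1) = (x - b (n + 1)) * p n - p (n - 1))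
    (hΦ : ∀ n > N, Φ n = (p n : ℂ) - Complex.exp (-(κ n : ℂ) * Complex.I) * (p (n - 1) : ℂ)) :
    ∀ n > N,
      ‖Φ (n + 1)‖ ≤ (1 + (κ (n + 1) - κ n) / Real.sin (κ n)) * ‖Φ n‖ ∧
      (1 - (κ (n + 1) - κ n) / Real.sin (κ n)) * ‖Φ n‖ ≤ ‖Φ (n + 1)‖ := by
  intro n hn
  have hn' : n + 1 > N := by omega
  obtain ⟨hκ₀, hκπ, hcos⟩ := hκ n hn
  obtain ⟨hκ₀', hκπ', hcos'⟩ := hκ (n + 1) hn'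
  have hmem : κ n ∈ Set.Icc 0 Real.pi := ⟨hκ₀, by linarith [Real.pi_pos]⟩
  have hmem' : κ (n + 1) ∈ Set.Icc 0 Real.pi := ⟨hκ₀', by linarith [Real.pi_pos]⟩
  have hpos : 0 < κ n := by
    refine (Real.strictAntiOn_cos.lt_iff_gt hmem ⟨le_rfl, Real.pi_pos.le⟩).1 ?_
    linarith [hosc n hn, Real.cos_zero]
  have hmono : κ n ≤ κ (n + 1) :=
    (Real.strictAntiOn_cos.le_iff_ge hmem' hmem).1 (by linarith [hb n])
  have hsin : 0 < Real.sin (κ n) := Real.sin_pos_of_pos_of_lt_pi hpos (by linarith)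
  have hp : p (n + 1) = 2 * Real.cos (κ (n + 1)) * p n - p (n - 1) := by rw [hrec, hcos']
  rw [hΦ n hn, hΦ (n + 1) hn', add_sub_cancel_right, hp]
  exact norm_phasor_step_bounds hsin hmono (p n) (p (n - 1))

theorem stmt_8 (b κ p : ℤ → ℝ) (Φ : ℤ → ℂ) (N : ℤ) (x κinf : ℝ)
    (hb : ∀ n : ℤ, b n ≤ b (n + 1)) (hbneg : ∀ n : ℤ, b n < 0)
    (hblim : Filter.Tendsto b Filter.atTop (nhds 0))
    (hx : 0 < x ∧ x < 2)
    (hosc : ∀ n > N, x - b n < 2)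
    (hκ : ∀ n > N, 0 ≤ κ n ∧ κ n < Real.pi / 2 ∧ x - b n = 2 * Real.cos (κ n))
    (hκinf : κinf = Real.arccos (x / 2))
    (hrec : ∀ n : ℤ, p (n + 1) = (x - b (n + 1)) * p n - p (n - 1))
    (hΦ : ∀ n > N, Φ n = (p n : ℂ) - Complex.exp (-(κ n : ℂ) * Complex.I) * (p (n - 1) : ℂ)) :
    ∀ n > N,
      ‖Φ (n + 1)‖ ≤ (1 + (κ (n + 1) - κ n) / Real.sin (κ n)) * ‖Φ n‖ ∧
      (1 - (κ (n + 1) - κ n) / Real.sin (κ n)) * ‖Φ n‖ ≤ ‖Φ (n + 1)‖ :=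
  stmt_8_general b κ p Φ N x hb hosc hκ hrec hΦ
end

section
/- Let $0 < a_n \le a_{n+1} \le 1$ with $a_n \to 1$, $b_n \equiv 0$, and $x \in (0,2)$. Suppose $x/a_n \ge 2$ for $n \le N$ and define $\gamma_n \ge 0$ by $x/a_n = 2\cosh\gamma_n$ (so $\gamma_{n+1} \le \gamma_n$ and $a_n/a_{n+1} = \cosh\gamma_{n+1}/\cosh\gamma_n$). Let $\psi_{-1}=0$, $\psi_0 = 1$, $\psi_{n+1} = (1+e^{-2\gamma_{n+1}})\psi_n - \frac{a_n}{a_{n+1}} e^{-(\gamma_n+\gamma_{n+1})}\psi_{n-1}$. Then $\psi_{n+1} \ge \psi_n$ for $0 \le n < N$, so $\psi_n \ge 1$. -/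
/-!
Write the recurrence as `ψ (n+1) = (1 + p n) ψ n - q n ψ (n-1)` with `p n = e^{-2γ_{n+1}}` and
`q n = (a_n / a_{n+1}) e^{-(γ_n + γ_{n+1})}`. Then
`ψ (n+1) - ψ n = p n (ψ n - ψ (n-1)) + (p n - q n) ψ (n-1)`, and `q n ≤ p n` because
`a_n ≤ a_{n+1}` forces `γ_{n+1} ≤ γ_n`. So if `0 ≤ ψ (n-1) ≤ ψ n` then `ψ n ≤ ψ (n+1)`, and an
induction starting from `ψ (-1) = 0 ≤ ψ 0` makes `ψ` nondecreasing on `[0, N]`.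
-/

open Real

lemma le_sub_mul_of_le {u v p q : ℝ} (hu : 0 ≤ u) (huv : u ≤ v) (hp : 0 ≤ p) (hqp : q ≤ p) :
    v ≤ (1 + p) * v - q * u := by
  nlinarith [mul_nonneg hp (sub_nonneg.2 huv), mul_nonneg (sub_nonneg.2 hqp) hu]

section Recurrence

variable {p q ψ : ℤ → ℝ} {N : ℤ}

lemma recurrence_nonneg_and_pred_le (hp : ∀ n, 0 ≤ n → n < N → 0 ≤ p n)
    (hqp : ∀ n, 0 ≤ n → n < N → q n ≤ p n) (hψm1 : 0 ≤ ψ (-1)) (hψ0 : ψ (-1) ≤ ψ 0)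
    (hrec : ∀ n, 0 ≤ n → n < N → ψ (n + 1) = (1 + p n) * ψ n - q n * ψ (n - 1)) :
    ∀ n, 0 ≤ n → n ≤ N → 0 ≤ ψ (n - 1) ∧ ψ (n - 1) ≤ ψ n := by
  intro n hn
  induction n, hn using Int.leInduction with
  | base => exact fun _ => ⟨hψm1, hψ0⟩
  | succ n hn ih =>
    intro hnN
    obtain ⟨hprev, hmono⟩ := ih (by omega)
    rw [add_sub_cancel_right, hrec n hn (by omega)]
    exact ⟨hprev.trans hmono,
      le_sub_mul_of_le hprev hmono (hp n hn (by omega)) (hqp n hn (by omega))⟩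

lemma recurrence_le_succ (hp : ∀ n, 0 ≤ n → n < N → 0 ≤ p n)
    (hqp : ∀ n, 0 ≤ n → n < N → q n ≤ p n) (hψm1 : 0 ≤ ψ (-1)) (hψ0 : ψ (-1) ≤ ψ 0)
    (hrec : ∀ n, 0 ≤ n → n < N → ψ (n + 1) = (1 + p n) * ψ n - q n * ψ (n - 1))
    (n : ℤ) (hn : 0 ≤ n) (hnN : n < N) : ψ n ≤ ψ (n + 1) := by
  simpa using (recurrence_nonneg_and_pred_le hp hqp hψm1 hψ0 hrec (n + 1) (by omega) hnN).2

end Recurrence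

lemma apply_zero_le_of_le_succ {ψ : ℤ → ℝ} {N : ℤ} (hψ : ∀ n, 0 ≤ n → n < N → ψ n ≤ ψ (n + 1)) :
    ∀ n, 0 ≤ n → n ≤ N → ψ 0 ≤ ψ n := by
  intro n hn
  induction n, hn using Int.leInduction with
  | base => exact fun _ => le_rfl
  | succ n hn ih => exact fun hnN => (ih (by omega)).trans (hψ n hn (by omega))

lemma le_of_div_eq_two_mul_cosh {x a a' g g' : ℝ} (hx : 0 ≤ x) (ha : 0 < a) (haa' : a ≤ a')
    (hg : 0 ≤ g) (hg' : 0 ≤ g') (h : x / a = 2 * cosh g) (h' : x / a' = 2 * cosh g') :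
    g' ≤ g := by
  have hcosh : cosh g' ≤ cosh g := by
    have := div_le_div_of_nonneg_left hx ha haa'
    linarith
  rwa [cosh_le_cosh, abs_of_nonneg hg, abs_of_nonneg hg'] at hcosh

lemma mul_exp_neg_add_le {c g g' : ℝ} (hc1 : c ≤ 1) (hg : g' ≤ g) :
    c * exp (-(g + g')) ≤ exp (-2 * g') :=
  (mul_le_of_le_one_left (exp_pos _).le hc1).trans (exp_le_exp.2 (by linarith))

theorem stmt_10_general (a γ ψ : ℤ → ℝ) (N : ℤ) (x : ℝ)
    (ha0 : ∀ n : ℤ, 0 < a n) (hamono : ∀ n : ℤ, a n ≤ a (n + 1))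
    (hx : 0 < x ∧ x < 2)
    (hγ : ∀ n ≤ N, 0 ≤ γ n ∧ x / a n = 2 * Real.cosh (γ n))
    (hψm1 : ψ (-1) = 0) (hψ0 : ψ 0 = 1)
    (hrec : ∀ n : ℤ, 0 ≤ n → n < N →
      ψ (n + 1) = (1 + Real.exp (-2 * γ (n + 1))) * ψ n
        - a n / a (n + 1) * Real.exp (-(γ n + γ (n + 1))) * ψ (n - 1)) :
    (∀ n : ℤ, 0 ≤ n → n < N → ψ n ≤ ψ (n + 1)) ∧
    (∀ n : ℤ, 0 ≤ n → n ≤ N → 1 ≤ ψ n) := by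
  have hγ_anti : ∀ n, 0 ≤ n → n < N → γ (n + 1) ≤ γ n := fun n _ hnN =>
    le_of_div_eq_two_mul_cosh hx.1.le (ha0 n) (hamono n) (hγ n hnN.le).1
      (hγ (n + 1) (by omega)).1 (hγ n hnN.le).2 (hγ (n + 1) (by omega)).2
  have hqp : ∀ n, 0 ≤ n → n < N →
      a n / a (n + 1) * exp (-(γ n + γ (n + 1))) ≤ exp (-2 * γ (n + 1)) := fun n hn hnN =>
    mul_exp_neg_add_le (div_le_one_of_le₀ (hamono n) (ha0 _).le) (hγ_anti n hn hnN)
  have hmono := recurrence_le_succ (fun _ _ _ => (exp_pos _).le) hqp hψm1.ge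
    (by norm_num [hψm1, hψ0]) hrec
  exact ⟨hmono, fun n hn hnN => hψ0 ▸ apply_zero_le_of_le_succ hmono n hn hnN⟩

theorem stmt_10 (a γ ψ : ℤ → ℝ) (N : ℤ) (x : ℝ)
    (ha0 : ∀ n : ℤ, 0 < a n) (hamono : ∀ n : ℤ, a n ≤ a (n + 1))
    (hale : ∀ n : ℤ, a n ≤ 1)
    (halim : Filter.Tendsto a Filter.atTop (nhds 1))
    (hx : 0 < x ∧ x < 2)
    (hforb : ∀ n ≤ N, 2 ≤ x / a n)
    (hγ : ∀ n ≤ N, 0 ≤ γ n ∧ x / a n = 2 * Real.cosh (γ n))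
    (hψm1 : ψ (-1) = 0) (hψ0 : ψ 0 = 1)
    (hrec : ∀ n : ℤ, 0 ≤ n → n < N →
      ψ (n + 1) = (1 + Real.exp (-2 * γ (n + 1))) * ψ n
        - a n / a (n + 1) * Real.exp (-(γ n + γ (n + 1))) * ψ (n - 1)) :
    (∀ n : ℤ, 0 ≤ n → n < N → ψ n ≤ ψ (n + 1)) ∧
    (∀ n : ℤ, 0 ≤ n → n ≤ N → 1 ≤ ψ n) :=
  stmt_10_general a γ ψ N x ha0 hamono hx hγ hψm1 hψ0 hrec
end

section
/- In the setting of monotone $a_n$ (with $\gamma_n$, $\psi_n$ as above: $0 < a_n \le a_{n+1} \le 1$, $x/a_n = 2\cosh\gamma_n \ge 2$ for $n \le N$, $\psi$ satisfying the modified recursion), define $W_n = e^{\gamma_{n+1}}\psi_n - \frac{a_n}{a_{n+1}} e^{-\gamma_n}\psi_{n-1}$. Then $W_n \le e^{\gamma_{n+1}}$ for $0 \le n \le N-1$, and consequently $\psi_{n+1} \le 1 + \psi_n$, so $\psi_n \le n+1$. -/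
set_option maxHeartbeats 1000000 in
theorem stmt_12 (a γ ψ W : ℤ → ℝ) (N : ℤ) (x : ℝ)
    (ha0 : ∀ n : ℤ, 0 < a n) (hamono : ∀ n : ℤ, a n ≤ a (n + 1))
    (hale : ∀ n : ℤ, a n ≤ 1)
    (hx : 0 < x ∧ x < 2)
    (hforb : ∀ n ≤ N, 2 ≤ x / a n)
    (hγ : ∀ n ≤ N, 0 ≤ γ n ∧ x / a n = 2 * Real.cosh (γ n))
    (hψm1 : ψ (-1) = 0) (hψ0 : ψ 0 = 1)
    (hrec : ∀ n : ℤ, 0 ≤ n → n < N →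
      ψ (n + 1) = (1 + Real.exp (-2 * γ (n + 1))) * ψ n
        - a n / a (n + 1) * Real.exp (-(γ n + γ (n + 1))) * ψ (n - 1))
    (hW : ∀ n : ℤ, 0 ≤ n → n ≤ N - 1 →
      W n = Real.exp (γ (n + 1)) * ψ n - a n / a (n + 1) * Real.exp (-γ n) * ψ (n - 1)) :
    (∀ n : ℤ, 0 ≤ n → n ≤ N - 1 → W n ≤ Real.exp (γ (n + 1))) ∧
    (∀ n : ℤ, 0 ≤ n → n ≤ N - 2 → ψ (n + 1) ≤ 1 + ψ n) ∧
    (∀ n : ℤ, 0 ≤ n → n ≤ N - 1 → ψ n ≤ n + 1) := by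
  obtain ⟨hx0, _hx2⟩ := hx
  have hxa : ∀ n ≤ N, x = 2 * Real.cosh (γ n) * a n := by
    intro n hn
    have h := (hγ n hn).2
    rw [div_eq_iff (ha0 n).ne'] at h
    linarith
  have hγdec : ∀ n : ℤ, n + 1 ≤ N → γ (n + 1) ≤ γ n := by
    intro n hn
    have h0 := hxa n (by omega)
    have h1 := hxa (n + 1) hn
    have hc : Real.cosh (γ (n + 1)) ≤ Real.cosh (γ n) := by
      nlinarith [ha0 n, ha0 (n + 1), hamono n, Real.cosh_pos (γ n),
        Real.cosh_pos (γ (n + 1))]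
    have hg0 := (hγ n (by omega)).1
    have hg1 := (hγ (n + 1) hn).1
    have h2 := Real.cosh_le_cosh.mp hc
    rwa [abs_of_nonneg hg1, abs_of_nonneg hg0] at h2
  -- key inequality
  have hkey : ∀ n : ℤ, n + 2 ≤ N →
      Real.exp (γ (n + 2)) * Real.exp (-γ (n + 1)) ≤ a (n + 1) / a (n + 2) := by
    intro n hn
    have h1 := hxa (n + 1) (by omega)
    have h2 := hxa (n + 2) (by omega)
    have hr : a (n + 1) / a (n + 2) = Real.cosh (γ (n + 2)) / Real.cosh (γ (n + 1)) := by
      rw [div_eq_div_iff (ha0 (n + 2)).ne' (Real.cosh_pos _).ne']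
      nlinarith [h1, h2]
    have hdec : γ (n + 2) ≤ γ (n + 1) := by
      have h := hγdec (n + 1) (by omega)
      rwa [show n + 1 + 1 = n + 2 from by ring] at h
    have hee : Real.exp (γ (n + 2)) ≤ Real.exp (γ (n + 1)) := Real.exp_le_exp.mpr hdec
    have he1f1 : Real.exp (γ (n + 1)) * Real.exp (-γ (n + 1)) = 1 := by
      rw [← Real.exp_add]; simp
    have he2f2 : Real.exp (γ (n + 2)) * Real.exp (-γ (n + 2)) = 1 := by
      rw [← Real.exp_add]; simp
    have e1p := Real.exp_pos (γ (n + 1))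
    have e2p := Real.exp_pos (γ (n + 2))
    have f1p := Real.exp_pos (-γ (n + 1))
    have f2p := Real.exp_pos (-γ (n + 2))
    have hP : (0:ℝ) < Real.exp (γ (n + 1)) * Real.exp (γ (n + 1)) * Real.exp (γ (n + 2)) := by
      positivity
    have hstep : Real.exp (γ (n + 2)) * Real.exp (-γ (n + 1)) * Real.exp (-γ (n + 1))
        ≤ Real.exp (-γ (n + 2)) := by
      have hA : Real.exp (γ (n + 2)) * Real.exp (-γ (n + 1)) * Real.exp (-γ (n + 1)) *
          (Real.exp (γ (n + 1)) * Real.exp (γ (n + 1)) * Real.exp (γ (n + 2)))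
          = Real.exp (γ (n + 2)) * Real.exp (γ (n + 2)) := by
        linear_combination (Real.exp (γ (n + 2)) ^ 2 * Real.exp (γ (n + 1)) *
          Real.exp (-γ (n + 1)) + Real.exp (γ (n + 2)) ^ 2) * he1f1
      have hB : Real.exp (-γ (n + 2)) *
          (Real.exp (γ (n + 1)) * Real.exp (γ (n + 1)) * Real.exp (γ (n + 2)))
          = Real.exp (γ (n + 1)) * Real.exp (γ (n + 1)) := by
        linear_combination (Real.exp (γ (n + 1)) * Real.exp (γ (n + 1))) * he2f2
      have hsq : Real.exp (γ (n + 2)) * Real.exp (γ (n + 2))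
          ≤ Real.exp (γ (n + 1)) * Real.exp (γ (n + 1)) :=
        mul_le_mul hee hee e2p.le e1p.le
      have hmul : Real.exp (γ (n + 2)) * Real.exp (-γ (n + 1)) * Real.exp (-γ (n + 1)) *
          (Real.exp (γ (n + 1)) * Real.exp (γ (n + 1)) * Real.exp (γ (n + 2)))
          ≤ Real.exp (-γ (n + 2)) *
          (Real.exp (γ (n + 1)) * Real.exp (γ (n + 1)) * Real.exp (γ (n + 2))) := by
        rw [hA, hB]; exact hsq
      exact le_of_mul_le_mul_right hmul hP
    rw [hr, le_div_iff₀ (Real.cosh_pos _)]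
    rw [Real.cosh_eq, Real.cosh_eq]
    have hq : Real.exp (γ (n + 2)) * (Real.exp (γ (n + 1)) * Real.exp (-γ (n + 1)))
        = Real.exp (γ (n + 2)) := by rw [he1f1, mul_one]
    nlinarith [hstep, hq]
  -- nonnegativity of ψ and of the auxiliary quantity U
  have hψU : ∀ k : ℕ, (k : ℤ) ≤ N - 1 →
      0 ≤ ψ (k : ℤ) ∧
      0 ≤ ψ (k : ℤ) - a (k : ℤ) / a ((k : ℤ) + 1) *
        Real.exp (γ ((k : ℤ) + 1) - γ (k : ℤ)) * ψ ((k : ℤ) - 1) := by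
    intro k
    induction k with
    | zero =>
      intro _
      push_cast
      norm_num [hψ0, hψm1]
    | succ k ih =>
      intro hk
      push_cast at hk ⊢
      rw [show (k : ℤ) + 1 + 1 = (k : ℤ) + 2 from by ring,
        show (k : ℤ) + 1 - 1 = (k : ℤ) from by ring]
      obtain ⟨hs, hU⟩ := ih (by omega)
      have hrk := hrec (k : ℤ) (Int.natCast_nonneg k) (by omega)
      have hdec : γ ((k : ℤ) + 2) ≤ γ ((k : ℤ) + 1) := by
        have h := hγdec ((k : ℤ) + 1) (by omega)
        rwa [show (k : ℤ) + 1 + 1 = (k : ℤ) + 2 from by ring] at h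
      have ha12 : a ((k : ℤ) + 1) ≤ a ((k : ℤ) + 2) := by
        have h := hamono ((k : ℤ) + 1)
        rwa [show (k : ℤ) + 1 + 1 = (k : ℤ) + 2 from by ring] at h
      have hd1 : a ((k : ℤ) + 1) / a ((k : ℤ) + 2) ≤ 1 :=
        (div_le_one (ha0 _)).mpr ha12
      have hd0 : (0:ℝ) ≤ a ((k : ℤ) + 1) / a ((k : ℤ) + 2) := (div_pos (ha0 _) (ha0 _)).le
      have hex1 : Real.exp (γ ((k : ℤ) + 2) - γ ((k : ℤ) + 1)) ≤ 1 :=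
        Real.exp_le_one_iff.mpr (by linarith)
      have hr1 : a ((k : ℤ) + 1) / a ((k : ℤ) + 2) *
          Real.exp (γ ((k : ℤ) + 2) - γ ((k : ℤ) + 1)) ≤ 1 := by
        nlinarith [Real.exp_pos (γ ((k : ℤ) + 2) - γ ((k : ℤ) + 1))]
      have hr0 : (0:ℝ) ≤ a ((k : ℤ) + 1) / a ((k : ℤ) + 2) *
          Real.exp (γ ((k : ℤ) + 2) - γ ((k : ℤ) + 1)) :=
        mul_nonneg (div_pos (ha0 _) (ha0 _)).le (Real.exp_pos _).le
      have hid2 : a (k : ℤ) / a ((k : ℤ) + 1) *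
          (Real.exp (-2 * γ ((k : ℤ) + 1)) * Real.exp (γ ((k : ℤ) + 1) - γ (k : ℤ))) *
          ψ ((k : ℤ) - 1)
          = a (k : ℤ) / a ((k : ℤ) + 1) * Real.exp (-(γ (k : ℤ) + γ ((k : ℤ) + 1))) *
          ψ ((k : ℤ) - 1) := by
        rw [← Real.exp_add,
          show -2 * γ ((k : ℤ) + 1) + (γ ((k : ℤ) + 1) - γ (k : ℤ))
            = -(γ (k : ℤ) + γ ((k : ℤ) + 1)) from by ring]
      have hU1 : 0 ≤ ψ ((k : ℤ) + 1) - a ((k : ℤ) + 1) / a ((k : ℤ) + 2) *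
          Real.exp (γ ((k : ℤ) + 2) - γ ((k : ℤ) + 1)) * ψ (k : ℤ) := by
        rw [hrk]
        nlinarith [mul_nonneg (Real.exp_pos (-2 * γ ((k : ℤ) + 1))).le hU,
          mul_nonneg (sub_nonneg.mpr hr1) hs, hid2]
      refine ⟨by nlinarith [hU1, mul_nonneg hr0 hs], hU1⟩
  -- the W bound
  have hmainW : ∀ k : ℕ, (k : ℤ) ≤ N - 1 → W (k : ℤ) ≤ Real.exp (γ ((k : ℤ) + 1)) := by
    intro k
    induction k with
    | zero =>
      intro hk
      push_cast
      rw [hW 0 le_rfl (by omega)]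
      norm_num [hψ0, hψm1]
    | succ k ih =>
      intro hk
      push_cast at hk ⊢
      rw [show (k : ℤ) + 1 + 1 = (k : ℤ) + 2 from by ring]
      have hIH := ih (by omega)
      have hWk := hW (k : ℤ) (Int.natCast_nonneg k) (by omega)
      have hWk1 := hW ((k : ℤ) + 1) (by omega) (by omega)
      rw [show (k : ℤ) + 1 + 1 = (k : ℤ) + 2 from by ring,
        show (k : ℤ) + 1 - 1 = (k : ℤ) from by ring] at hWk1
      have hrk := hrec (k : ℤ) (Int.natCast_nonneg k) (by omega)
      have hs := (hψU k (by omega)).1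
      have hkeyk := hkey (k : ℤ) (by omega)
      have he1f1 : Real.exp (γ ((k : ℤ) + 1)) * Real.exp (-γ ((k : ℤ) + 1)) = 1 := by
        rw [← Real.exp_add]; simp
      have hE : Real.exp (-2 * γ ((k : ℤ) + 1))
          = Real.exp (-γ ((k : ℤ) + 1)) * Real.exp (-γ ((k : ℤ) + 1)) := by
        rw [← Real.exp_add]; congr 1; ring
      have hF : Real.exp (-(γ (k : ℤ) + γ ((k : ℤ) + 1)))
          = Real.exp (-γ (k : ℤ)) * Real.exp (-γ ((k : ℤ) + 1)) := by
        rw [← Real.exp_add]; congr 1; ring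
      have hIH' : Real.exp (γ ((k : ℤ) + 2)) * Real.exp (-γ ((k : ℤ) + 1)) * W (k : ℤ)
          ≤ Real.exp (γ ((k : ℤ) + 2)) * Real.exp (-γ ((k : ℤ) + 1)) *
            Real.exp (γ ((k : ℤ) + 1)) :=
        mul_le_mul_of_nonneg_left hIH (by positivity)
      rw [hWk] at hIH'
      have q1 : Real.exp (γ ((k : ℤ) + 2)) * Real.exp (-γ ((k : ℤ) + 1)) *
          Real.exp (γ ((k : ℤ) + 1)) = Real.exp (γ ((k : ℤ) + 2)) := by
        rw [mul_assoc, mul_comm (Real.exp (-γ ((k : ℤ) + 1))), he1f1, mul_one]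
      have hq2 : Real.exp (γ ((k : ℤ) + 2)) * Real.exp (-γ ((k : ℤ) + 1)) *
          Real.exp (γ ((k : ℤ) + 1)) * ψ (k : ℤ)
          = Real.exp (γ ((k : ℤ) + 2)) * ψ (k : ℤ) := by rw [q1]
      have hterm : (0:ℝ) ≤ (a ((k : ℤ) + 1) / a ((k : ℤ) + 2) -
          Real.exp (γ ((k : ℤ) + 2)) * Real.exp (-γ ((k : ℤ) + 1))) *
          (Real.exp (-γ ((k : ℤ) + 1)) * ψ (k : ℤ)) :=
        mul_nonneg (sub_nonneg.mpr hkeyk)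
          (mul_nonneg (Real.exp_pos _).le hs)
      rw [hWk1, hrk, hE, hF]
      nlinarith [hIH', q1, hq2, hterm]
  -- the step inequality ψ (k+1) ≤ 1 + ψ k
  have hstep2 : ∀ k : ℕ, (k : ℤ) ≤ N - 2 → ψ ((k : ℤ) + 1) ≤ 1 + ψ (k : ℤ) := by
    intro k hk
    have hWk := hW (k : ℤ) (Int.natCast_nonneg k) (by omega)
    have hWle := hmainW k (by omega)
    have hrk := hrec (k : ℤ) (Int.natCast_nonneg k) (by omega)
    have hs := (hψU k (by omega)).1
    have hg1 := (hγ ((k : ℤ) + 1) (by omega)).1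
    have he1f1 : Real.exp (γ ((k : ℤ) + 1)) * Real.exp (-γ ((k : ℤ) + 1)) = 1 := by
      rw [← Real.exp_add]; simp
    have hE : Real.exp (-2 * γ ((k : ℤ) + 1))
        = Real.exp (-γ ((k : ℤ) + 1)) * Real.exp (-γ ((k : ℤ) + 1)) := by
      rw [← Real.exp_add]; congr 1; ring
    have hF : Real.exp (-(γ (k : ℤ) + γ ((k : ℤ) + 1)))
        = Real.exp (-γ (k : ℤ)) * Real.exp (-γ ((k : ℤ) + 1)) := by
      rw [← Real.exp_add]; congr 1; ring
    have hIH' : Real.exp (-γ ((k : ℤ) + 1)) * W (k : ℤ)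
        ≤ Real.exp (-γ ((k : ℤ) + 1)) * Real.exp (γ ((k : ℤ) + 1)) :=
      mul_le_mul_of_nonneg_left hWle (by positivity)
    rw [hWk] at hIH'
    have q1 : Real.exp (-γ ((k : ℤ) + 1)) * Real.exp (γ ((k : ℤ) + 1)) = 1 := by
      rw [mul_comm]; exact he1f1
    have hq2 : Real.exp (-γ ((k : ℤ) + 1)) * Real.exp (γ ((k : ℤ) + 1)) * ψ (k : ℤ)
        = ψ (k : ℤ) := by rw [q1, one_mul]
    have hf1le1 : Real.exp (-γ ((k : ℤ) + 1)) ≤ 1 :=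
      Real.exp_le_one_iff.mpr (by linarith)
    have hterm : (0:ℝ) ≤ (1 - Real.exp (-γ ((k : ℤ) + 1)) * Real.exp (-γ ((k : ℤ) + 1))) *
        ψ (k : ℤ) :=
      mul_nonneg (by nlinarith [Real.exp_pos (-γ ((k : ℤ) + 1))]) hs
    rw [hrk, hE, hF]
    nlinarith [hIH', q1, hq2, hterm]
  -- linear bound on ψ
  have hpsib : ∀ k : ℕ, (k : ℤ) ≤ N - 1 → ψ (k : ℤ) ≤ (k : ℤ) + 1 := by
    intro k
    induction k with
    | zero => intro _; push_cast; norm_num [hψ0]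
    | succ k ih =>
      intro hk
      push_cast at hk ⊢
      have h1 := hstep2 k (by omega)
      have h2 := ih (by omega)
      push_cast at h2 ⊢
      linarith
  refine ⟨?_, ?_, ?_⟩
  · intro n hn0 hn1
    lift n to ℕ using hn0
    exact hmainW n hn1
  · intro n hn0 hn2
    lift n to ℕ using hn0
    linarith [hstep2 n hn2]
  · intro n hn0 hn1
    lift n to ℕ using hn0
    exact hpsib n hn1
end

section
/- Let $0 < a_n \le a_{n+1}$, $x > 0$ with $x/a_n < 2$ for $n > N$, define $\kappa_n \in (0,\pi/2)$ by $x/a_n = 2\cos\kappa_n$ (so $\kappa_n \le \kappa_{n+1}$ and $a_n/a_{n+1} = \cos\kappa_{n+1}/\cos\kappa_n$). Let $p_n$ be real, satisfying $p_{n+1} = \frac{x}{a_{n+1}} p_n - \frac{a_n}{a_{n+1}} p_{n-1}$, and set $\Phi_n = p_n - e^{-i\kappa_n}p_{n-1}$. Then $\frac{|\Phi_{n+1}|}{|\Phi_n|} \le 1 + \frac{|\kappa_{n+1}-\kappa_n|}{\frac{1}{2}\sin(2\kappa_n)}$ (when $\Phi_n \ne 0$). -/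
/-!
With `c = cos κₙ`, the recurrence reads `pₙ₊₁ = 2 cos κₙ₊₁ pₙ - (cos κₙ₊₁ / c) pₙ₋₁`, which gives
`Φₙ₊₁ - e^{iκₙ₊₁} Φₙ = i e^{-iκₙ} sin(κₙ₊₁ - κₙ) pₙ₋₁ / c`.
Since `Im Φₙ = sin κₙ · pₙ₋₁`, we have `|pₙ₋₁| ≤ ‖Φₙ‖ / sin κₙ`, and `|sin t| ≤ |t|` finishes the bound.
-/

open Complex

theorem div_eq_div_of_div_eq_of_div_eq {x b c s t : ℝ} (hb : x / b = s) (hc : x / c = t)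
    (hs : s ≠ 0) :
    b / c = t / s := by
  have hx : x ≠ 0 := by rintro rfl; simp [eq_comm, hs] at hb
  rw [← hb, ← hc, div_div_div_cancel_left' _ _ hx]

theorem im_ofReal_sub_exp_neg_mul_I_mul (k u v : ℝ) :
    ((u : ℂ) - exp (-(k : ℂ) * I) * v).im = Real.sin k * v := by
  rw [← ofReal_neg, exp_mul_I, ← ofReal_cos, ← ofReal_sin]
  simp [sin_ofReal_re]

theorem abs_mul_sin_le_norm_ofReal_sub_exp_neg_mul_I_mul {k : ℝ} (hk : 0 ≤ Real.sin k) (u v : ℝ) :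
    |v| * Real.sin k ≤ ‖(u : ℂ) - exp (-(k : ℂ) * I) * v‖ := by
  calc |v| * Real.sin k = |Real.sin k * v| := by rw [abs_mul, abs_of_nonneg hk, mul_comm]
    _ ≤ _ := by rw [← im_ofReal_sub_exp_neg_mul_I_mul]; exact abs_im_le_norm _

theorem ofReal_sub_exp_neg_mul_I_mul_recurrence {k : ℝ} (hk : Real.cos k ≠ 0) (k' u v : ℝ) :
    ((2 * Real.cos k' * u - Real.cos k' / Real.cos k * v : ℝ) : ℂ) - exp (-(k' : ℂ) * I) * u
      = exp ((k' : ℂ) * I) * ((u : ℂ) - exp (-(k : ℂ) * I) * v)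
        + I * exp (-(k : ℂ) * I) * ((Real.sin (k' - k) / Real.cos k * v : ℝ) : ℂ) := by
  have hk' : Complex.cos k ≠ 0 := by rw [← ofReal_cos]; exact_mod_cast hk
  rw [← ofReal_neg, ← ofReal_neg, exp_mul_I, exp_mul_I, exp_mul_I, Real.sin_sub]
  push_cast
  simp only [Complex.cos_neg, Complex.sin_neg]
  field_simp
  linear_combination cos (k' : ℂ) * v * (sin_sq_add_cos_sq (k : ℂ) - sin (k : ℂ) ^ 2 * I_sq)

theorem norm_ofReal_sub_exp_neg_mul_I_mul_recurrence_le {k : ℝ} (hk0 : 0 < k)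
    (hk : k < Real.pi / 2) (k' u v : ℝ) :
    ‖((2 * Real.cos k' * u - Real.cos k' / Real.cos k * v : ℝ) : ℂ) - exp (-(k' : ℂ) * I) * u‖
      ≤ (1 + |k' - k| / (1 / 2 * Real.sin (2 * k))) * ‖(u : ℂ) - exp (-(k : ℂ) * I) * v‖ := by
  set Φ := (u : ℂ) - exp (-(k : ℂ) * I) * v
  have hcos : 0 < Real.cos k := Real.cos_pos_of_mem_Ioo ⟨by linarith [Real.pi_pos], hk⟩
  have hsin : 0 < Real.sin k := Real.sin_pos_of_pos_of_lt_pi hk0 (by linarith [Real.pi_pos])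
  have hv : |v| ≤ ‖Φ‖ / Real.sin k :=
    (le_div_iff₀ hsin).2 (abs_mul_sin_le_norm_ofReal_sub_exp_neg_mul_I_mul hsin.le u v)
  calc _ = ‖exp ((k' : ℂ) * I) * Φ
          + I * exp (-(k : ℂ) * I) * ((Real.sin (k' - k) / Real.cos k * v : ℝ) : ℂ)‖ := by
        rw [ofReal_sub_exp_neg_mul_I_mul_recurrence hcos.ne']
    _ ≤ ‖Φ‖ + |Real.sin (k' - k)| * |v| / Real.cos k := by
        refine (norm_add_le _ _).trans_eq ?_
        rw [← ofReal_neg]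
        simp only [norm_mul, norm_exp_ofReal_mul_I, norm_I, norm_real, Real.norm_eq_abs,
          abs_div, abs_of_pos hcos]
        ring
    _ ≤ ‖Φ‖ + |k' - k| * (‖Φ‖ / Real.sin k) / Real.cos k := by
        gcongr _ + ?_ * ?_ / _
        exact Real.abs_sin_le_abs
    _ = _ := by
        rw [Real.sin_two_mul]
        field_simp

theorem stmt_13_general (a κ p : ℤ → ℝ) (Φ : ℤ → ℂ) (N : ℤ) (x : ℝ)
    (hκ : ∀ n > N, 0 < κ n ∧ κ n < Real.pi / 2 ∧ x / a n = 2 * Real.cos (κ n))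
    (hrec : ∀ n : ℤ, p (n + 1) = x / a (n + 1) * p n - a n / a (n + 1) * p (n - 1))
    (hΦ : ∀ n > N, Φ n = (p n : ℂ) - Complex.exp (-(κ n : ℂ) * Complex.I) * (p (n - 1) : ℂ)) :
    ∀ n > N, Φ n ≠ 0 →
      ‖Φ (n + 1)‖ / ‖Φ n‖ ≤
        1 + |κ (n + 1) - κ n| / (1 / 2 * Real.sin (2 * κ n)) := by
  intro n hn hΦn
  obtain ⟨hk0, hk, hxk⟩ := hκ n hn
  obtain ⟨-, -, hxk'⟩ := hκ (n + 1) (by omega)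
  have hcos : 0 < Real.cos (κ n) := Real.cos_pos_of_mem_Ioo ⟨by linarith [Real.pi_pos], hk⟩
  have hratio : a n / a (n + 1) = Real.cos (κ (n + 1)) / Real.cos (κ n) := by
    rw [div_eq_div_of_div_eq_of_div_eq hxk hxk' (by positivity), mul_div_mul_left _ _ two_ne_zero]
  have hΦsucc := hΦ (n + 1) (by omega)
  rw [add_sub_cancel_right, hrec, hxk', hratio] at hΦsucc
  rw [div_le_iff₀ (norm_pos_iff.2 hΦn), hΦsucc, hΦ n hn]
  exact norm_ofReal_sub_exp_neg_mul_I_mul_recurrence_le hk0 hk _ _ _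

theorem stmt_13 (a κ p : ℤ → ℝ) (Φ : ℤ → ℂ) (N : ℤ) (x : ℝ)
    (ha0 : ∀ n : ℤ, 0 < a n) (hamono : ∀ n : ℤ, a n ≤ a (n + 1))
    (hx : 0 < x)
    (hosc : ∀ n > N, x / a n < 2)
    (hκ : ∀ n > N, 0 < κ n ∧ κ n < Real.pi / 2 ∧ x / a n = 2 * Real.cos (κ n))
    (hrec : ∀ n : ℤ, p (n + 1) = x / a (n + 1) * p n - a n / a (n + 1) * p (n - 1))
    (hΦ : ∀ n > N, Φ n = (p n : ℂ) - Complex.exp (-(κ n : ℂ) * Complex.I) * (p (n - 1) : ℂ)) :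
    ∀ n > N, Φ n ≠ 0 →
      ‖Φ (n + 1)‖ / ‖Φ n‖ ≤
        1 + |κ (n + 1) - κ n| / (1 / 2 * Real.sin (2 * κ n)) :=
  stmt_13_general a κ p Φ N x hκ hrec hΦ
end

section
/- Let $V$ be $C^1$ on $[0,\infty)$ with $V' < 0$, $0 < E < V(0)$, $N = V^{-1}(E)$, $\gamma(x) = \sqrt{V(x)-E}$ on $[0,N]$, and let $u$ solve $-u''+Vu=Eu$, $u(0)=0$, $u'(0)=1$. Define $\psi(x) = u(x)\exp(-\int_0^x \gamma(y)\,dy)$. Then $0 \le \psi'(x) \le 1$ for $x \in [0, N]$. -/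
/-!
On `[0, N]` we have `V ≥ E`, so `u'' = (V - E) u` keeps `u` nonnegative. With `γ = √(V - E)`
and `F = ∫₀ˣ γ`, the cross terms cancel because `γ² = V - E`:
`((u' - γ u) e^F)' = -γ' u e^F ≥ 0` and `((u' + γ u) e^{-F})' = γ' u e^{-F} ≤ 0`, since `γ`
decreases. Both functions equal `1` at `0`, and
`ψ' = (u' - γ u) e^{-F} = (u' - γ u) e^F · e^{-2F} = (u' + γ u) e^{-F} - 2 γ u e^{-F}`
lies in `[0, 1]`.
-/

open Set Real

lemma monotoneOn_Icc_of_hasDerivAt_nonneg {f f' : ℝ → ℝ} {a b : ℝ}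
    (hc : ContinuousOn f (Icc a b)) (hd : ∀ x ∈ Ioo a b, HasDerivAt f (f' x) x)
    (hnn : ∀ x ∈ Ioo a b, 0 ≤ f' x) : MonotoneOn f (Icc a b) :=
  monotoneOn_of_hasDerivWithinAt_nonneg (convex_Icc a b) hc
    (by simpa only [interior_Icc] using fun x hx => (hd x hx).hasDerivWithinAt)
    (by simpa only [interior_Icc] using hnn)

lemma antitoneOn_Icc_of_hasDerivAt_nonpos {f f' : ℝ → ℝ} {a b : ℝ}
    (hc : ContinuousOn f (Icc a b)) (hd : ∀ x ∈ Ioo a b, HasDerivAt f (f' x) x)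
    (hnp : ∀ x ∈ Ioo a b, f' x ≤ 0) : AntitoneOn f (Icc a b) :=
  antitoneOn_of_hasDerivWithinAt_nonpos (convex_Icc a b) hc
    (by simpa only [interior_Icc] using fun x hx => (hd x hx).hasDerivWithinAt)
    (by simpa only [interior_Icc] using hnp)

lemma deriv_eq_or_eq_zero_of_hasDerivWithinAt {f : ℝ → ℝ} {s : Set ℝ} {x c : ℝ}
    (hs : UniqueDiffWithinAt ℝ s x) (h : HasDerivWithinAt f c s x) :
    deriv f x = c ∨ deriv f x = 0 := by
  by_cases hdiff : DifferentiableAt ℝ f x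
  · exact .inl (by rw [← hdiff.derivWithin hs, h.derivWithin hs])
  · exact .inr (deriv_zero_of_not_differentiableAt hdiff)

lemma hasDerivWithinAt_integral_Icc {E : Type*} [NormedAddCommGroup E] [NormedSpace ℝ E]
    [CompleteSpace E] {f : ℝ → E} {a b x : ℝ} (hf : ContinuousOn f (Icc a b))
    (hx : x ∈ Icc a b) :
    HasDerivWithinAt (fun u => ∫ t in a..u, f t) (f x) (Icc a b) x := by
  have : Fact (x ∈ Icc a b) := ⟨hx⟩
  exact intervalIntegral.integral_hasDerivWithinAt_right
    ((hf.mono (uIcc_subset_Icc (left_mem_Icc.2 (hx.1.trans hx.2)) hx)).intervalIntegrable)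
    (hf.stronglyMeasurableAtFilter_nhdsWithin measurableSet_Icc x) (hf x hx)

section

variable {u u' q : ℝ → ℝ} {a b : ℝ}

lemma monotoneOn_deriv_of_ode (hu : ∀ x ∈ Icc a b, HasDerivAt u (u' x) x)
    (hu' : ∀ x ∈ Icc a b, HasDerivAt u' (q x * u x) x) (hq : ∀ x ∈ Icc a b, 0 ≤ q x)
    (hua : 0 ≤ u a) (hu'_nonneg : ∀ x ∈ Ioo a b, 0 ≤ u' x) : MonotoneOn u' (Icc a b) := by
  have hmono : MonotoneOn u (Icc a b) :=
    monotoneOn_Icc_of_hasDerivAt_nonneg (fun x hx => (hu x hx).continuousAt.continuousWithinAt)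
      (fun x hx => hu x (Ioo_subset_Icc_self hx)) hu'_nonneg
  refine monotoneOn_Icc_of_hasDerivAt_nonneg
    (fun x hx => (hu' x hx).continuousAt.continuousWithinAt)
    (fun x hx => hu' x (Ioo_subset_Icc_self hx)) fun x hx => ?_
  have hx' := Ioo_subset_Icc_self hx
  exact mul_nonneg (hq x hx') (hua.trans (hmono (left_mem_Icc.2 (hx'.1.trans hx'.2)) hx' hx'.1))

/-- At the first zero `z` of `u'`, the function `u` would be nondecreasing on `[a, z]`, hence
nonnegative, hence `u'` nondecreasing there, forcing `u' z ≥ u' a > 0`. -/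
lemma deriv_pos_of_ode (hu : ∀ x ∈ Icc a b, HasDerivAt u (u' x) x)
    (hu' : ∀ x ∈ Icc a b, HasDerivAt u' (q x * u x) x) (hq : ∀ x ∈ Icc a b, 0 ≤ q x)
    (hua : 0 ≤ u a) (hu'a : 0 < u' a) : ∀ x ∈ Icc a b, 0 < u' x := by
  by_contra! ⟨x, hx, hx0⟩
  set Z := Icc a b ∩ u' ⁻¹' Iic 0
  have hZ : IsClosed Z := ContinuousOn.preimage_isClosed_of_isClosed
    (fun y hy => (hu' y hy).continuousAt.continuousWithinAt) isClosed_Icc isClosed_Iic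
  have hzZ : sInf Z ∈ Z := hZ.csInf_mem ⟨x, hx, hx0⟩ ⟨a, fun y hy => hy.1.1⟩
  have hsub : Icc a (sInf Z) ⊆ Icc a b := Icc_subset_Icc_right hzZ.1.2
  have hmono : MonotoneOn u' (Icc a (sInf Z)) :=
    monotoneOn_deriv_of_ode (fun y hy => hu y (hsub hy)) (fun y hy => hu' y (hsub hy))
      (fun y hy => hq y (hsub hy)) hua fun y hy => by
        have hyZ : y ∉ Z := notMem_of_lt_csInf hy.2 ⟨a, fun w hw => hw.1.1⟩
        simp only [Z, mem_inter_iff, mem_preimage, mem_Iic, not_and, not_le] at hyZ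
        exact (hyZ (hsub (Ioo_subset_Icc_self hy))).le
  have := hmono (left_mem_Icc.2 hzZ.1.1) (right_mem_Icc.2 hzZ.1.1) hzZ.1.1
  linarith [show u' (sInf Z) ≤ 0 from hzZ.2]

lemma monotoneOn_of_ode (hu : ∀ x ∈ Icc a b, HasDerivAt u (u' x) x)
    (hu' : ∀ x ∈ Icc a b, HasDerivAt u' (q x * u x) x) (hq : ∀ x ∈ Icc a b, 0 ≤ q x)
    (hua : 0 ≤ u a) (hu'a : 0 < u' a) : MonotoneOn u (Icc a b) :=
  monotoneOn_Icc_of_hasDerivAt_nonneg (fun x hx => (hu x hx).continuousAt.continuousWithinAt)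
    (fun x hx => hu x (Ioo_subset_Icc_self hx))
    fun x hx => (deriv_pos_of_ode hu hu' hq hua hu'a x (Ioo_subset_Icc_self hx)).le

end

section

variable {u u' γ γ' F : ℝ → ℝ} {x : ℝ}

lemma hasDerivAt_sub_mul_mul_exp (hu : HasDerivAt u (u' x) x)
    (hu' : HasDerivAt u' (γ x ^ 2 * u x) x) (hγ : HasDerivAt γ (γ' x) x)
    (hF : HasDerivAt F (γ x) x) :
    HasDerivAt (fun y => (u' y - γ y * u y) * exp (F y)) (-γ' x * u x * exp (F x)) x :=
  ((hu'.fun_sub (hγ.fun_mul hu)).fun_mul hF.exp).congr_deriv (by ring)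

lemma hasDerivAt_add_mul_mul_exp_neg (hu : HasDerivAt u (u' x) x)
    (hu' : HasDerivAt u' (γ x ^ 2 * u x) x) (hγ : HasDerivAt γ (γ' x) x)
    (hF : HasDerivAt F (γ x) x) :
    HasDerivAt (fun y => (u' y + γ y * u y) * exp (-F y)) (γ' x * u x * exp (-F x)) x :=
  ((hu'.fun_add (hγ.fun_mul hu)).fun_mul hF.fun_neg.exp).congr_deriv (by ring)

end

lemma sub_mul_exp_neg_mem_Icc_of_le {p g F : ℝ} (hg : 0 ≤ g)
    (hG : 1 ≤ (p - g) * exp F) (hW : (p + g) * exp (-F) ≤ 1) :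
    (p - g) * exp (-F) ∈ Icc 0 1 := by
  have hpg : 0 ≤ p - g := by
    by_contra! h
    linarith [mul_neg_of_neg_of_pos h (exp_pos F)]
  have hgF : 0 ≤ g * exp (-F) := mul_nonneg hg (exp_pos _).le
  exact ⟨mul_nonneg hpg (exp_pos _).le, by linarith⟩

theorem sub_mul_mul_exp_neg_mem_Icc_of_ode {u u' γ γ' F : ℝ → ℝ} {a b : ℝ}
    (hu : ∀ x ∈ Icc a b, HasDerivAt u (u' x) x)
    (hu' : ∀ x ∈ Icc a b, HasDerivAt u' (γ x ^ 2 * u x) x)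
    (hγc : ContinuousOn γ (Icc a b)) (hγ_nonneg : ∀ x ∈ Icc a b, 0 ≤ γ x)
    (hγ : ∀ x ∈ Ioo a b, HasDerivAt γ (γ' x) x) (hγ' : ∀ x ∈ Ioo a b, γ' x ≤ 0)
    (hF : ∀ x ∈ Icc a b, HasDerivWithinAt F (γ x) (Icc a b) x)
    (hua : u a = 0) (hu'a : u' a = 1) (hFa : F a = 0) :
    ∀ x ∈ Icc a b, (u' x - γ x * u x) * exp (-F x) ∈ Icc 0 1 := by
  intro x hx
  have ha : a ∈ Icc a b := left_mem_Icc.2 (hx.1.trans hx.2)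
  have hu_nonneg : ∀ y ∈ Icc a b, 0 ≤ u y := fun y hy =>
    hua ▸ monotoneOn_of_ode hu hu' (fun _ _ => sq_nonneg _) hua.ge (by simp [hu'a]) ha hy hy.1
  have huc : ContinuousOn u (Icc a b) := fun y hy => (hu y hy).continuousAt.continuousWithinAt
  have hu'c : ContinuousOn u' (Icc a b) := fun y hy => (hu' y hy).continuousAt.continuousWithinAt
  have hFc : ContinuousOn F (Icc a b) := fun y hy => (hF y hy).continuousWithinAt
  have hFd : ∀ y ∈ Ioo a b, HasDerivAt F (γ y) y := fun y hy =>
    (hF y (Ioo_subset_Icc_self hy)).hasDerivAt (Icc_mem_nhds hy.1 hy.2)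
  have hG : MonotoneOn (fun y => (u' y - γ y * u y) * exp (F y)) (Icc a b) :=
    monotoneOn_Icc_of_hasDerivAt_nonneg (by fun_prop)
      (fun y hy => hasDerivAt_sub_mul_mul_exp (hu y (Ioo_subset_Icc_self hy))
        (hu' y (Ioo_subset_Icc_self hy)) (hγ y hy) (hFd y hy))
      fun y hy => mul_nonneg (mul_nonneg (neg_nonneg.2 (hγ' y hy))
        (hu_nonneg y (Ioo_subset_Icc_self hy))) (exp_pos _).le
  have hW : AntitoneOn (fun y => (u' y + γ y * u y) * exp (-F y)) (Icc a b) :=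
    antitoneOn_Icc_of_hasDerivAt_nonpos (by fun_prop)
      (fun y hy => hasDerivAt_add_mul_mul_exp_neg (hu y (Ioo_subset_Icc_self hy))
        (hu' y (Ioo_subset_Icc_self hy)) (hγ y hy) (hFd y hy))
      fun y hy => mul_nonpos_of_nonpos_of_nonneg (mul_nonpos_of_nonpos_of_nonneg (hγ' y hy)
        (hu_nonneg y (Ioo_subset_Icc_self hy))) (exp_pos _).le
  have hGx := hG ha hx hx.1
  have hWx := hW ha hx hx.1
  simp only [hua, hu'a, hFa, mul_zero, sub_zero, add_zero, neg_zero, exp_zero, mul_one] at hGx hWx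
  exact sub_mul_exp_neg_mem_Icc_of_le (mul_nonneg (hγ_nonneg x hx) (hu_nonneg x hx)) hGx hWx

theorem stmt_15_general (V u u' : ℝ → ℝ) (E N : ℝ)
    (hV : ContDiffOn ℝ 1 V (Set.Ici 0))
    (hV' : ∀ x ≥ (0 : ℝ), derivWithin V (Set.Ici 0) x < 0)
    (hN : 0 < N) (hVN : V N = E)
    (hu : ∀ x ≥ (0 : ℝ), HasDerivAt u (u' x) x)
    (hu' : ∀ x ≥ (0 : ℝ), HasDerivAt u' ((V x - E) * u x) x)
    (hu0 : u 0 = 0) (hu'0 : u' 0 = 1)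
    (ψ : ℝ → ℝ)
    (hψ : ψ = fun x => u x * Real.exp (-∫ y in (0 : ℝ)..x, Real.sqrt (V y - E))) :
    ∀ x ∈ Set.Icc (0 : ℝ) N, 0 ≤ deriv ψ x ∧ deriv ψ x ≤ 1 := by
  have hVd : ∀ x > 0, HasDerivAt V (derivWithin V (Ici 0) x) x := fun x hx => by
    rw [derivWithin_of_mem_nhds (Ici_mem_nhds hx)]
    exact ((hV.differentiableOn one_ne_zero).differentiableAt (Ici_mem_nhds hx)).hasDerivAt
  have hanti : StrictAntiOn V (Ici 0) :=
    strictAntiOn_of_hasDerivWithinAt_neg (convex_Ici 0) hV.continuousOn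
      (by rw [interior_Ici]; exact fun x hx => (hVd x hx).hasDerivWithinAt)
      (by rw [interior_Ici]; exact fun x hx => hV' x (le_of_lt hx))
  have hVE : ∀ x ∈ Icc 0 N, E ≤ V x := fun x hx => hVN ▸ hanti.antitoneOn hx.1 hN.le hx.2
  have hVE' : ∀ x ∈ Ioo 0 N, 0 < V x - E := fun x hx =>
    sub_pos.2 (hVN ▸ hanti hx.1.le hN.le hx.2)
  have hγc : ContinuousOn (fun x => √(V x - E)) (Icc 0 N) :=
    ((hV.continuousOn.mono Icc_subset_Ici_self).sub continuousOn_const).sqrt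
  have hF := fun x (hx : x ∈ Icc 0 N) => hasDerivWithinAt_integral_Icc hγc hx
  have hbounds := sub_mul_mul_exp_neg_mem_Icc_of_ode (fun x hx => hu x hx.1)
    (fun x hx => by rw [sq_sqrt (sub_nonneg.2 (hVE x hx))]; exact hu' x hx.1) hγc
    (fun x _ => sqrt_nonneg _) (fun x hx => ((hVd x hx.1).sub_const E).sqrt (hVE' x hx).ne')
    (fun x hx => (div_neg_of_neg_of_pos (hV' x hx.1.le) 
      (mul_pos two_pos (sqrt_pos.2 (hVE' x hx)))).le)
    hF hu0 hu'0 intervalIntegral.integral_same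
  intro x hx
  have hψ' : HasDerivWithinAt ψ ((u' x - √(V x - E) * u x) *
      exp (-∫ y in 0..x, √(V y - E))) (Icc 0 N) x := by
    rw [hψ]
    exact ((hu x hx.1).hasDerivWithinAt.fun_mul (hF x hx).fun_neg.exp).congr_deriv (by ring)
  -- `ψ` need not be differentiable at the endpoints, where `deriv ψ` may be the junk value `0`.
  rcases deriv_eq_or_eq_zero_of_hasDerivWithinAt (uniqueDiffOn_Icc hN x hx) hψ' with h | h <;>
    rw [h]
  · exact hbounds x hx
  · norm_num

theorem stmt_15 (V u u' : ℝ → ℝ) (E N : ℝ)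
    (hV : ContDiffOn ℝ 1 V (Set.Ici 0))
    (hV' : ∀ x ≥ (0 : ℝ), derivWithin V (Set.Ici 0) x < 0)
    (hE : 0 < E ∧ E < V 0)
    (hN : 0 < N) (hVN : V N = E)
    (hu : ∀ x ≥ (0 : ℝ), HasDerivAt u (u' x) x)
    (hu' : ∀ x ≥ (0 : ℝ), HasDerivAt u' ((V x - E) * u x) x)
    (hu0 : u 0 = 0) (hu'0 : u' 0 = 1)
    (ψ : ℝ → ℝ)
    (hψ : ψ = fun x => u x * Real.exp (-∫ y in (0 : ℝ)..x, Real.sqrt (V y - E))) :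
    ∀ x ∈ Set.Icc (0 : ℝ) N, 0 ≤ deriv ψ x ∧ deriv ψ x ≤ 1 :=
  stmt_15_general V u u' E N hV hV' hN hVN hu hu' hu0 hu'0 ψ hψ
end

section
/- Let $V$ be $C^1$ with $V' < 0$, $0 < E < V(0)$, $N = V^{-1}(E) > 1$, and $u$, $\gamma$ as above. Then $e^{-2V(0)} e^{2\int_0^N \gamma(y)dy} \le u(N)^2 + u'(N)^2 \le (N^2+1) e^{2\int_0^N \gamma(y)dy}$. -/
/-! With `W = V - E`, `γ = √W` and `Γ x = ∫₀ˣ γ` (`agmonDist W x`), the quantity `u' - γ u` stays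
nonnegative because `γ` decreases. It makes `u' e^{-Γ}` nonincreasing, whence `u' ≤ e^Γ` and
`u ≤ x e^Γ`, and makes `(γ(0) u + u') e^{-Γ}` nondecreasing, whence `e^Γ ≤ γ(0) u + u'`;
Cauchy–Schwarz turns the latter into `e^{2Γ} ≤ (W(0) + 1)(u² + u'²)`. -/

open Set Real

theorem monotoneOn_Icc_of_hasDerivWithinAt_nonneg {f f' : ℝ → ℝ} {a b : ℝ}
    (hf : ∀ x ∈ Icc a b, HasDerivWithinAt f (f' x) (Icc a b) x)
    (hf' : ∀ x ∈ Ioo a b, 0 ≤ f' x) : MonotoneOn f (Icc a b) := by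
  refine monotoneOn_of_hasDerivWithinAt_nonneg (convex_Icc a b)
    (HasDerivWithinAt.continuousOn hf) (fun x hx => ?_) (by rwa [interior_Icc])
  rw [interior_Icc] at hx ⊢
  exact (hf x (Ioo_subset_Icc_self hx)).mono Ioo_subset_Icc_self

theorem antitoneOn_Icc_of_hasDerivWithinAt_nonpos {f f' : ℝ → ℝ} {a b : ℝ}
    (hf : ∀ x ∈ Icc a b, HasDerivWithinAt f (f' x) (Icc a b) x)
    (hf' : ∀ x ∈ Ioo a b, f' x ≤ 0) : AntitoneOn f (Icc a b) := by
  refine antitoneOn_of_hasDerivWithinAt_nonpos (convex_Icc a b)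
    (HasDerivWithinAt.continuousOn hf) (fun x hx => ?_) (by rwa [interior_Icc])
  rw [interior_Icc] at hx ⊢
  exact (hf x (Ioo_subset_Icc_self hx)).mono Ioo_subset_Icc_self

structure IsDirichletSolution (W u u' : ℝ → ℝ) (N : ℝ) : Prop where
  hasDerivWithinAt : ∀ x ∈ Icc 0 N, HasDerivWithinAt u (u' x) (Icc 0 N) x
  hasDerivWithinAt_deriv : ∀ x ∈ Icc 0 N, HasDerivWithinAt u' (W x * u x) (Icc 0 N) x
  apply_zero : u 0 = 0
  deriv_zero : u' 0 = 1

noncomputable def agmonDist (W : ℝ → ℝ) (x : ℝ) : ℝ := ∫ y in (0 : ℝ)..x, √(W y)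

section

variable {W u u' : ℝ → ℝ} {N x : ℝ}

@[simp] theorem agmonDist_zero : agmonDist W 0 = 0 := intervalIntegral.integral_same

theorem hasDerivWithinAt_agmonDist (hW : ContinuousOn W (Icc 0 N)) (hx : x ∈ Icc 0 N) :
    HasDerivWithinAt (agmonDist W) √(W x) (Icc 0 N) x := by
  have : Fact (x ∈ Icc 0 N) := ⟨hx⟩
  have hγ : ContinuousOn (fun y => √(W y)) (Icc 0 N) := hW.sqrt
  exact intervalIntegral.integral_hasDerivWithinAt_right
    (hγ.mono (uIcc_subset_Icc (left_mem_Icc.2 (hx.1.trans hx.2)) hx)).intervalIntegrable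
    (hγ.stronglyMeasurableAtFilter_nhdsWithin measurableSet_Icc x) (hγ x hx)

theorem hasDerivWithinAt_exp_neg_agmonDist (hW : ContinuousOn W (Icc 0 N)) (hx : x ∈ Icc 0 N) :
    HasDerivWithinAt (fun y => exp (-agmonDist W y)) (exp (-agmonDist W x) * -√(W x))
      (Icc 0 N) x :=
  (hasDerivWithinAt_agmonDist hW hx).neg.exp

namespace IsDirichletSolution

theorem deriv_pos (hs : IsDirichletSolution W u u' N) (hW : ∀ x ∈ Icc 0 N, 0 ≤ W x)
    (hx : x ∈ Icc 0 N) : 0 < u' x := by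
  have h0 : (0 : ℝ) ∈ Icc 0 N := left_mem_Icc.2 (hx.1.trans hx.2)
  -- `(u u')' = u'² + W u² ≥ 0`, and then `(u'²)' = 2 W u u' ≥ 0`.
  have hprod : ∀ y ∈ Icc 0 N, 0 ≤ u y * u' y := by
    intro y hy
    have hmono := monotoneOn_Icc_of_hasDerivWithinAt_nonneg
      (fun y hy => (hs.hasDerivWithinAt y hy).mul (hs.hasDerivWithinAt_deriv y hy))
      (fun y hy => by nlinarith [hW y (Ioo_subset_Icc_self hy), sq_nonneg (u y)])
      h0 hy hy.1
    simpa [hs.apply_zero] using hmono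
  have hsq : ∀ y ∈ Icc 0 N, 1 ≤ u' y * u' y := by
    intro y hy
    have hmono := monotoneOn_Icc_of_hasDerivWithinAt_nonneg
      (fun y hy => (hs.hasDerivWithinAt_deriv y hy).mul (hs.hasDerivWithinAt_deriv y hy))
      (fun y hy => by
        nlinarith [mul_nonneg (hW y (Ioo_subset_Icc_self hy)) (hprod y (Ioo_subset_Icc_self hy))])
      h0 hy hy.1
    simpa [hs.deriv_zero] using hmono
  by_contra! hneg
  have hcont : ContinuousOn u' (Icc 0 x) :=
    (HasDerivWithinAt.continuousOn hs.hasDerivWithinAt_deriv).mono (Icc_subset_Icc_right hx.2)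
  obtain ⟨z, hz, hz0⟩ := intermediate_value_Icc' hx.1 hcont ⟨hneg, hs.deriv_zero ▸ zero_le_one⟩
  have hz1 := hsq z (Icc_subset_Icc_right hx.2 hz)
  rw [hz0, mul_zero] at hz1
  exact absurd hz1 (by norm_num)

theorem nonneg (hs : IsDirichletSolution W u u' N) (hW : ∀ x ∈ Icc 0 N, 0 ≤ W x)
    (hx : x ∈ Icc 0 N) : 0 ≤ u x := by
  have hmono := monotoneOn_Icc_of_hasDerivWithinAt_nonneg hs.hasDerivWithinAt
    (fun y hy => (hs.deriv_pos hW (Ioo_subset_Icc_self hy)).le)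
  simpa [hs.apply_zero] using hmono (left_mem_Icc.2 (hx.1.trans hx.2)) hx hx.1


theorem sqrt_mul_le_deriv (hs : IsDirichletSolution W u u' N) (hW_anti : AntitoneOn W (Icc 0 N))
    (hW : ∀ x ∈ Icc 0 N, 0 ≤ W x) (hx : x ∈ Icc 0 N) : √(W x) * u x ≤ u' x := by
  set c := √(W x)
  have hsub : Icc 0 x ⊆ Icc 0 N := Icc_subset_Icc_right hx.2
  -- On `[0, x]` we have `u'' = W u ≥ c² u`, so `(u' - c u) e^{c y}` is nondecreasing.
  have hmono := monotoneOn_Icc_of_hasDerivWithinAt_nonneg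
    (f := fun y => (u' y - c * u y) * exp (c * y))
    (f' := fun y => (W y - c ^ 2) * u y * exp (c * y))
    (fun y hy => by
      have hd := ((hs.hasDerivWithinAt_deriv y (hsub hy)).sub
        ((hs.hasDerivWithinAt y (hsub hy)).const_mul c)).mul
        (((hasDerivWithinAt_id y (Icc 0 N)).const_mul c).exp)
      refine (hd.mono hsub).congr_deriv ?_
      simp only [Pi.sub_apply, id]
      ring)
    (fun y hy => by
      have hy' := Ioo_subset_Icc_self hy
      have hWy : c ^ 2 ≤ W y := by
        rw [sq_sqrt (hW x hx)]
        exact hW_anti (hsub hy') hx hy'.2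
      exact mul_nonneg (mul_nonneg (sub_nonneg.2 hWy) (hs.nonneg hW (hsub hy'))) (exp_pos _).le)
  have h1 : 1 ≤ (u' x - c * u x) * exp (c * x) := by
    simpa [hs.apply_zero, hs.deriv_zero] using
      hmono (left_mem_Icc.2 hx.1) (right_mem_Icc.2 hx.1) hx.1
  have := pos_of_mul_pos_left (one_pos.trans_le h1) (exp_pos _).le
  linarith

theorem deriv_le_exp_agmonDist (hs : IsDirichletSolution W u u' N)
    (hW_cont : ContinuousOn W (Icc 0 N)) (hW_anti : AntitoneOn W (Icc 0 N))
    (hW : ∀ x ∈ Icc 0 N, 0 ≤ W x) (hx : x ∈ Icc 0 N) : u' x ≤ exp (agmonDist W x) := by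
  have hanti := antitoneOn_Icc_of_hasDerivWithinAt_nonpos
    (f := fun y => u' y * exp (-agmonDist W y))
    (f' := fun y => -(√(W y) * ((u' y - √(W y) * u y) * exp (-agmonDist W y))))
    (fun y hy => by
      refine ((hs.hasDerivWithinAt_deriv y hy).mul
        (hasDerivWithinAt_exp_neg_agmonDist hW_cont hy)).congr_deriv ?_
      linear_combination -(u y * exp (-agmonDist W y)) * sq_sqrt (hW y hy))
    (fun y hy => by
      have hy' := Ioo_subset_Icc_self hy
      exact neg_nonpos.2 (mul_nonneg (sqrt_nonneg _) (mul_nonneg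
        (sub_nonneg.2 (hs.sqrt_mul_le_deriv hW_anti hW hy')) (exp_pos _).le)))
  have h1 := hanti (left_mem_Icc.2 (hx.1.trans hx.2)) hx hx.1
  simp only [hs.deriv_zero, agmonDist_zero, neg_zero, exp_zero, mul_one, exp_neg] at h1
  rwa [mul_inv_le_iff₀ (exp_pos _), one_mul] at h1

theorem le_mul_exp_agmonDist (hs : IsDirichletSolution W u u' N)
    (hW_cont : ContinuousOn W (Icc 0 N)) (hW_anti : AntitoneOn W (Icc 0 N))
    (hW : ∀ x ∈ Icc 0 N, 0 ≤ W x) (hx : x ∈ Icc 0 N) : u x ≤ x * exp (agmonDist W x) := by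
  have hmono := monotoneOn_Icc_of_hasDerivWithinAt_nonneg
    (f := fun y => y - u y * exp (-agmonDist W y))
    (f' := fun y => 1 - (u' y - √(W y) * u y) * exp (-agmonDist W y))
    (fun y hy => by
      exact ((hasDerivWithinAt_id y _).sub ((hs.hasDerivWithinAt y hy).mul
        (hasDerivWithinAt_exp_neg_agmonDist hW_cont hy))).congr_deriv (by ring))
    (fun y hy => by
      have hy' := Ioo_subset_Icc_self hy
      have hq : u' y * exp (-agmonDist W y) ≤ 1 := by
        rw [exp_neg, mul_inv_le_iff₀ (exp_pos _), one_mul]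
        exact hs.deriv_le_exp_agmonDist hW_cont hW_anti hW hy'
      have hγu : 0 ≤ √(W y) * u y := mul_nonneg (sqrt_nonneg _) (hs.nonneg hW hy')
      nlinarith [exp_pos (-agmonDist W y)])
  have h1 := hmono (left_mem_Icc.2 (hx.1.trans hx.2)) hx hx.1
  simp only [hs.apply_zero, agmonDist_zero, zero_mul, sub_zero, sub_nonneg, exp_neg] at h1
  rwa [mul_inv_le_iff₀ (exp_pos _)] at h1

theorem exp_agmonDist_le (hs : IsDirichletSolution W u u' N)
    (hW_cont : ContinuousOn W (Icc 0 N)) (hW_anti : AntitoneOn W (Icc 0 N))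
    (hW : ∀ x ∈ Icc 0 N, 0 ≤ W x) (hx : x ∈ Icc 0 N) :
    exp (agmonDist W x) ≤ √(W 0) * u x + u' x := by
  have h0 : (0 : ℝ) ∈ Icc 0 N := left_mem_Icc.2 (hx.1.trans hx.2)
  have hmono := monotoneOn_Icc_of_hasDerivWithinAt_nonneg
    (f := fun y => (√(W 0) * u y + u' y) * exp (-agmonDist W y))
    (f' := fun y => (√(W 0) - √(W y)) * ((u' y - √(W y) * u y) * exp (-agmonDist W y)))
    (fun y hy => by
      refine ((((hs.hasDerivWithinAt y hy).const_mul (√(W 0))).add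
        (hs.hasDerivWithinAt_deriv y hy)).mul
        (hasDerivWithinAt_exp_neg_agmonDist hW_cont hy)).congr_deriv ?_
      simp only [Pi.add_apply]
      linear_combination -(u y * exp (-agmonDist W y)) * sq_sqrt (hW y hy))
    (fun y hy => by
      have hy' := Ioo_subset_Icc_self hy
      exact mul_nonneg (sub_nonneg.2 (sqrt_le_sqrt (hW_anti h0 hy' hy'.1))) (mul_nonneg
        (sub_nonneg.2 (hs.sqrt_mul_le_deriv hW_anti hW hy')) (exp_pos _).le))
  have h1 := hmono h0 hx hx.1
  simp only [hs.apply_zero, hs.deriv_zero, agmonDist_zero, mul_zero, zero_add, neg_zero, exp_zero,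
    mul_one, exp_neg] at h1
  rwa [le_mul_inv_iff₀ (exp_pos _), one_mul] at h1

theorem sq_add_sq_le (hs : IsDirichletSolution W u u' N)
    (hW_cont : ContinuousOn W (Icc 0 N)) (hW_anti : AntitoneOn W (Icc 0 N))
    (hW : ∀ x ∈ Icc 0 N, 0 ≤ W x) (hx : x ∈ Icc 0 N) :
    u x ^ 2 + u' x ^ 2 ≤ (x ^ 2 + 1) * exp (2 * agmonDist W x) := by
  have hu := hs.le_mul_exp_agmonDist hW_cont hW_anti hW hx
  have hu' := hs.deriv_le_exp_agmonDist hW_cont hW_anti hW hx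
  calc u x ^ 2 + u' x ^ 2 ≤ (x * exp (agmonDist W x)) ^ 2 + exp (agmonDist W x) ^ 2 := by
        gcongr
        · exact hs.nonneg hW hx
        · exact (hs.deriv_pos hW hx).le
    _ = (x ^ 2 + 1) * exp (2 * agmonDist W x) := by
        rw [mul_comm 2, exp_mul, rpow_two]
        ring

theorem exp_two_mul_agmonDist_le (hs : IsDirichletSolution W u u' N)
    (hW_cont : ContinuousOn W (Icc 0 N)) (hW_anti : AntitoneOn W (Icc 0 N))
    (hW : ∀ x ∈ Icc 0 N, 0 ≤ W x) (hx : x ∈ Icc 0 N) :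
    exp (2 * agmonDist W x) ≤ (W 0 + 1) * (u x ^ 2 + u' x ^ 2) := by
  have h0 : (0 : ℝ) ∈ Icc 0 N := left_mem_Icc.2 (hx.1.trans hx.2)
  have h := hs.exp_agmonDist_le hW_cont hW_anti hW hx
  calc exp (2 * agmonDist W x) = exp (agmonDist W x) ^ 2 := by
        rw [mul_comm 2, exp_mul, rpow_two]
    _ ≤ (√(W 0) * u x + u' x) ^ 2 := by gcongr
    _ ≤ (√(W 0) ^ 2 + 1) * (u x ^ 2 + u' x ^ 2) := by
        nlinarith [sq_nonneg (√(W 0) * u' x - u x)]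
    _ = (W 0 + 1) * (u x ^ 2 + u' x ^ 2) := by rw [sq_sqrt (hW 0 h0)]

end IsDirichletSolution

end

theorem stmt_16 (V u u' : ℝ → ℝ) (E N : ℝ)
    (hV : ContDiffOn ℝ 1 V (Set.Ici 0))
    (hV' : ∀ x ≥ (0 : ℝ), derivWithin V (Set.Ici 0) x < 0)
    (hE : 0 < E ∧ E < V 0)
    (hN : 1 < N) (hVN : V N = E)
    (hu : ∀ x ≥ (0 : ℝ), HasDerivAt u (u' x) x)
    (hu' : ∀ x ≥ (0 : ℝ), HasDerivAt u' ((V x - E) * u x) x)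
    (hu0 : u 0 = 0) (hu'0 : u' 0 = 1) :
    Real.exp (-2 * V 0) * Real.exp (2 * ∫ y in (0 : ℝ)..N, Real.sqrt (V y - E))
        ≤ u N ^ 2 + u' N ^ 2 ∧
    u N ^ 2 + u' N ^ 2
        ≤ (N ^ 2 + 1) * Real.exp (2 * ∫ y in (0 : ℝ)..N, Real.sqrt (V y - E)) := by
  set W : ℝ → ℝ := fun x => V x - E
  have hNmem : N ∈ Icc 0 N := right_mem_Icc.2 (by linarith)
  have hV_anti : StrictAntiOn V (Ici 0) := by
    refine strictAntiOn_of_deriv_neg (convex_Ici 0) hV.continuousOn fun x hx => ?_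
    rw [interior_Ici] at hx
    rw [← derivWithin_of_mem_nhds (Ici_mem_nhds hx)]
    exact hV' x hx.le
  have hW_anti : AntitoneOn W (Icc 0 N) := fun x hx y hy hxy =>
    sub_le_sub_right (hV_anti.antitoneOn hx.1 hy.1 hxy) E
  have hW_cont : ContinuousOn W (Icc 0 N) :=
    (hV.continuousOn.mono Icc_subset_Ici_self).sub continuousOn_const
  have hW : ∀ x ∈ Icc 0 N, 0 ≤ W x := fun x hx => by
    simpa [W, hVN] using hW_anti hx hNmem hx.2
  have hs : IsDirichletSolution W u u' N :=
    ⟨fun x hx => (hu x hx.1).hasDerivWithinAt, fun x hx => (hu' x hx.1).hasDerivWithinAt, hu0, hu'0⟩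
  have hW0 : W 0 + 1 ≤ exp (2 * V 0) :=
    (add_one_le_exp _).trans (exp_le_exp.2 (by simp only [W]; linarith [hE.1, hE.2]))
  refine ⟨?_, hs.sq_add_sq_le hW_cont hW_anti hW hNmem⟩
  calc exp (-2 * V 0) * exp (2 * agmonDist W N)
      ≤ exp (-2 * V 0) * ((W 0 + 1) * (u N ^ 2 + u' N ^ 2)) := by
        gcongr; exact hs.exp_two_mul_agmonDist_le hW_cont hW_anti hW hNmem
    _ ≤ exp (-2 * V 0) * (exp (2 * V 0) * (u N ^ 2 + u' N ^ 2)) := by gcongr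
    _ = u N ^ 2 + u' N ^ 2 := by rw [← mul_assoc, ← exp_add]; simp
end

section
/- Let $f$ be $C^2$ on $[\log 2, \infty)$ with $f > 0$, $f' < 0$, $f'' > 0$, $f(x) \to 0$, $N^\varepsilon(-f'(\log N))^{1/2} \to \infty$ for every $\varepsilon > 0$, and $\lim_{\varepsilon \downarrow 0} \limsup_{k\to\infty} \frac{-f'((1-\varepsilon)k)}{-f'(k)} = 1$. Let $S_N = \sum_{j=2}^N \sqrt{f(\log j) - f(\log N)}$. Then $\lim_{N\to\infty} \frac{S_N}{N(-f'(\log N))^{1/2}} = \frac{\sqrt{\pi}}{2}$. -/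
/-!
By the mean value theorem and the convexity of `f`, for `log 2 ≤ x ≤ y`
`(y - x) (-f' y) ≤ f x - f y ≤ (y - x) (-f' x)`.
With `x = log j`, `y = log N` the lower bound gives
`S N ≥ √(-f' (log N)) ∑ⱼ √(log N - log j)`, and comparing the sum with
`∫₁ᴺ √(log N - log t) dt = N ∫₀^{log N} e^{-x} √x dx` shows
`(1/N) ∑ⱼ √(log N - log j) → Γ(3/2) = √π / 2`.
For the upper bound split the sum at `j = N ^ (1 - ε)`: the terms with `j ≥ N ^ (1 - ε)` are at most
`√(log N - log j) √(-f' ((1 - ε) log N))`, which the ratio hypothesis compares with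
`√(-f' (log N))`; the remaining `N ^ (1 - ε)` terms are bounded by `√(f (log 2))`, which is
negligible by the growth hypothesis.
-/

open Filter Set MeasureTheory Real Topology

lemma integrableOn_exp_neg_mul_sqrt : IntegrableOn (fun x => exp (-x) * √x) (Ioi 0) := by
  have h := GammaIntegral_convergent (s := 3 / 2) (by norm_num)
  norm_num [← sqrt_eq_rpow] at h
  exact h

lemma integral_exp_neg_mul_sqrt : ∫ x in Ioi (0 : ℝ), exp (-x) * √x = √π / 2 := by
  have h := Gamma_eq_integral (s := 3 / 2) (by norm_num)
  rw [show (3 / 2 : ℝ) = 1 / 2 + 1 by norm_num, Gamma_add_one (by norm_num), Gamma_one_half_eq] at h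
  norm_num [← sqrt_eq_rpow] at h
  linarith

lemma integral_sqrt_log_sub_log {a : ℝ} (ha : 1 ≤ a) :
    ∫ t in (1 : ℝ)..a, √(log a - log t) = a * ∫ x in (0 : ℝ)..log a, exp (-x) * √x := by
  have ha0 : 0 < a := by linarith
  set φ : ℝ → ℝ := fun x => a * exp (-x)
  have hφ : ∀ x ∈ uIcc 0 (log a), HasDerivAt φ (-(a * exp (-x))) x := fun x _ => by
    simpa using ((hasDerivAt_neg x).exp).const_mul a
  have himage : φ '' uIcc 0 (log a) ⊆ Ici 1 := by
    rintro _ ⟨x, hx, rfl⟩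
    rw [uIcc_of_le (log_nonneg ha)] at hx
    calc (1 : ℝ) = a * exp (-log a) := by rw [exp_neg, exp_log ha0, mul_inv_cancel₀ ha0.ne']
      _ ≤ a * exp (-x) := by gcongr; exact hx.2
  have hcont : ContinuousOn (fun t => √(log a - log t)) (φ '' uIcc 0 (log a)) :=
    ((continuousOn_const.sub (continuousOn_log.mono fun t ht => by
      simp only [mem_compl_iff, mem_singleton_iff]; rintro rfl; norm_num at ht)).sqrt).mono himage
  have hsubst := intervalIntegral.integral_comp_mul_deriv' hφ (by fun_prop) hcont
  have hφ0 : φ 0 = a := by simp [φ]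
  have hφlog : φ (log a) = 1 := by simp [φ, exp_neg, exp_log ha0, ha0.ne']
  have hcomp : ∀ x, √(log a - log (φ x)) = √x := fun x => by
    simp [φ, log_mul ha0.ne' (exp_ne_zero _)]
  rw [hφ0, hφlog] at hsubst
  simp only [Function.comp_def, hcomp] at hsubst
  rw [intervalIntegral.integral_symm, ← hsubst, ← intervalIntegral.integral_neg,
    ← intervalIntegral.integral_const_mul]
  congr 1 with x
  ring

lemma AntitoneOn.sum_Icc_two_le_integral {g : ℝ → ℝ} {N : ℕ} (hN : 1 ≤ N)
    (hg : AntitoneOn g (Icc 1 N)) : ∑ j ∈ Finset.Icc 2 N, g j ≤ ∫ t in (1 : ℝ)..N, g t := by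
  have h := AntitoneOn.sum_le_integral_Ico (a := 1) hN (by rwa [Nat.cast_one])
  rwa [Finset.sum_Ico_add' (fun j : ℕ => g j), Finset.Ico_add_one_right_eq_Icc, Nat.cast_one] at h

lemma AntitoneOn.integral_le_sum_Icc_two {g : ℝ → ℝ} {N : ℕ} (hN : 1 < N)
    (hg : AntitoneOn g (Icc 1 N)) (hgN : 0 ≤ g N) :
    ∫ t in (1 : ℝ)..N, g t ≤ g 1 + ∑ j ∈ Finset.Icc 2 N, g j := by
  have h := AntitoneOn.integral_le_sum_Ico (a := 1) hN.le (by rwa [Nat.cast_one])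
  rw [Finset.sum_eq_sum_Ico_succ_bot hN, Nat.cast_one] at h
  have hIco : ∑ j ∈ Finset.Ico 2 N, g j ≤ ∑ j ∈ Finset.Icc 2 N, g j :=
    Finset.sum_le_sum_of_subset_of_nonneg Finset.Ico_subset_Icc_self fun j hj hj' => by
      obtain rfl : j = N := by
        simp only [Finset.mem_Icc, Finset.mem_Ico, not_and, not_lt] at hj hj'
        omega
      exact hgN
  linarith

lemma tendsto_sqrt_log_div_atTop : Tendsto (fun x => √(log x) / x) atTop (𝓝 0) := by
  have h := ((tendsto_pow_log_div_mul_add_atTop 1 0 1 one_ne_zero).mul tendsto_inv_atTop_zero).sqrt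
  simp only [pow_one, one_mul, add_zero, mul_zero, sqrt_zero] at h
  refine h.congr' ?_
  filter_upwards [eventually_gt_atTop 0] with x hx
  rw [← div_eq_mul_inv, div_div, sqrt_div' _ (by positivity), ← sq, sqrt_sq hx.le]

lemma tendsto_sum_sqrt_log_sub_log_div_self :
    Tendsto (fun N : ℕ => (∑ j ∈ Finset.Icc 2 N, √(log N - log j)) / N) atTop (𝓝 (√π / 2)) := by
  have hlog : Tendsto (fun N : ℕ => log N) atTop atTop :=
    tendsto_log_atTop.comp tendsto_natCast_atTop_atTop
  have hI := intervalIntegral_tendsto_integral_Ioi 0 integrableOn_exp_neg_mul_sqrt hlog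
  rw [integral_exp_neg_mul_sqrt] at hI
  have herr := tendsto_sqrt_log_div_atTop.comp (tendsto_natCast_atTop_atTop (R := ℝ))
  refine tendsto_of_tendsto_of_tendsto_of_le_of_le' (by simpa using hI.sub herr) hI ?_ ?_ <;>
    filter_upwards [eventually_ge_atTop 2] with N hN <;>
    have hN1 : (1 : ℝ) < N := by exact_mod_cast hN
  all_goals
    have hanti : AntitoneOn (fun t => √(log N - log t)) (Icc 1 N) := fun s hs t _ hst =>
      sqrt_le_sqrt (by gcongr; linarith [hs.1])
    have hint := integral_sqrt_log_sub_log hN1.le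
  · have h := hanti.integral_le_sum_Icc_two hN (by simp)
    rw [hint] at h
    simp only [log_one, sub_zero] at h ⊢
    rw [sub_le_iff_le_add, ← add_div, le_div_iff₀ (by positivity)]
    linarith
  · have h := hanti.sum_Icc_two_le_integral (by omega)
    rw [hint] at h
    rw [div_le_iff₀ (by positivity)]
    linarith

section MeanValue

variable {f f' : ℝ → ℝ} {c x y : ℝ}

lemma monotoneOn_Ici_of_hasDerivWithinAt_nonneg
    (hf : ∀ x ∈ Ici c, HasDerivWithinAt f (f' x) (Ici c) x) (hf' : ∀ x ∈ Ici c, 0 ≤ f' x) :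
    MonotoneOn f (Ici c) :=
  monotoneOn_of_hasDerivWithinAt_nonneg (convex_Ici c)
    (fun x hx => (hf x hx).continuousWithinAt)
    (fun x hx => (hf x (interior_subset hx)).mono interior_subset)
    (fun x hx => hf' x (interior_subset hx))

lemma exists_hasDerivWithinAt_Ici_eq_slope
    (hf : ∀ x ∈ Ici c, HasDerivWithinAt f (f' x) (Ici c) x) (hx : c ≤ x) (hxy : x < y) :
    ∃ t ∈ Ioo x y, f' t = (f y - f x) / (y - x) :=
  exists_hasDerivAt_eq_slope f f' hxy
    (fun t ht => ((hf t (hx.trans ht.1)).continuousWithinAt).mono fun _ hs => hx.trans hs.1)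
    (fun t ht => (hf t (hx.trans ht.1.le)).hasDerivAt (Ici_mem_nhds (hx.trans_lt ht.1)))

variable (hf : ∀ x ∈ Ici c, HasDerivWithinAt f (f' x) (Ici c) x) (hf' : MonotoneOn f' (Ici c))
include hf hf'

lemma sub_le_mul_neg_deriv_left (hx : c ≤ x) (hxy : x ≤ y) : f x - f y ≤ (y - x) * -f' x := by
  rcases hxy.eq_or_lt with rfl | hlt
  · simp
  obtain ⟨t, ht, hslope⟩ := exists_hasDerivWithinAt_Ici_eq_slope hf hx hlt
  have : f' x ≤ f' t := hf' hx (hx.trans ht.1.le) ht.1.le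
  rw [hslope, le_div_iff₀ (sub_pos.2 hlt)] at this
  linarith

lemma mul_neg_deriv_right_le_sub (hx : c ≤ x) (hxy : x ≤ y) : (y - x) * -f' y ≤ f x - f y := by
  rcases hxy.eq_or_lt with rfl | hlt
  · simp
  obtain ⟨t, ht, hslope⟩ := exists_hasDerivWithinAt_Ici_eq_slope hf hx hlt
  have : f' t ≤ f' y := hf' (hx.trans ht.1.le) (hx.trans hxy) ht.2.le
  rw [hslope, div_le_iff₀ (sub_pos.2 hlt)] at this
  linarith

end MeanValue

lemma card_filter_natCast_lt_le {s : Finset ℕ} (hs : 0 ∉ s) {M : ℝ} (hM : 0 ≤ M) :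
    ((s.filter fun j : ℕ => (j : ℝ) < M).card : ℝ) ≤ M := by
  have hsub : s.filter (fun j : ℕ => (j : ℝ) < M) ⊆ Finset.Icc 1 ⌊M⌋₊ := by
    intro j hj
    rw [Finset.mem_filter] at hj
    rw [Finset.mem_Icc, Nat.one_le_iff_ne_zero]
    exact ⟨fun h => hs (h ▸ hj.1), Nat.le_floor hj.2.le⟩
  calc ((s.filter fun j : ℕ => (j : ℝ) < M).card : ℝ) ≤ (Finset.Icc 1 ⌊M⌋₊).card := by
        exact_mod_cast Finset.card_le_card hsub
    _ = ⌊M⌋₊ := by simp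
    _ ≤ M := Nat.floor_le hM

lemma log_two_le_log_of_mem_Icc {j N : ℕ} (hj : j ∈ Finset.Icc 2 N) :
    log 2 ≤ log j ∧ log j ≤ log N := by
  rw [Finset.mem_Icc] at hj
  have h2 : (2 : ℝ) ≤ j := by exact_mod_cast hj.1
  exact ⟨log_le_log two_pos h2, log_le_log (by linarith) (by exact_mod_cast hj.2)⟩

section LogSum

variable {f f' : ℝ → ℝ}
  (hf : ∀ x ∈ Ici (log 2), HasDerivWithinAt f (f' x) (Ici (log 2)) x)
  (hf' : MonotoneOn f' (Ici (log 2)))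
include hf hf'

lemma sqrt_neg_deriv_mul_sum_le (N : ℕ) :
    √(-f' (log N)) * ∑ j ∈ Finset.Icc 2 N, √(log N - log j)
      ≤ ∑ j ∈ Finset.Icc 2 N, √(f (log j) - f (log N)) := by
  rw [Finset.mul_sum]
  refine Finset.sum_le_sum fun j hj => ?_
  obtain ⟨h2j, hjN⟩ := log_two_le_log_of_mem_Icc hj
  rw [mul_comm, ← sqrt_mul (sub_nonneg.2 hjN)]
  exact sqrt_le_sqrt (mul_neg_deriv_right_le_sub hf hf' h2j hjN)

lemma sum_sqrt_sub_le (hfpos : ∀ x ∈ Ici (log 2), 0 ≤ f x) (hf'neg : ∀ x ∈ Ici (log 2), f' x ≤ 0)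
    (N : ℕ) {M : ℝ} (hM : 2 ≤ M) :
    ∑ j ∈ Finset.Icc 2 N, √(f (log j) - f (log N))
      ≤ √(-f' (log M)) * ∑ j ∈ Finset.Icc 2 N, √(log N - log j) + M * √(f (log 2)) := by
  have hlogM : log 2 ≤ log M := log_le_log two_pos hM
  have hlarge : ∑ j ∈ (Finset.Icc 2 N).filter (fun j : ℕ => ¬(j : ℝ) < M), √(f (log j) - f (log N))
      ≤ √(-f' (log M)) * ∑ j ∈ Finset.Icc 2 N, √(log N - log j) := by
    rw [Finset.mul_sum]
    refine (Finset.sum_le_sum fun j hj => ?_).trans (Finset.sum_le_sum_of_subset_of_nonneg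
      (Finset.filter_subset _ _) fun j _ _ => by positivity)
    rw [Finset.mem_filter, not_lt] at hj
    obtain ⟨h2j, hjN⟩ := log_two_le_log_of_mem_Icc hj.1
    have hfj : -f' (log j) ≤ -f' (log M) :=
      neg_le_neg (hf' hlogM h2j (log_le_log (by linarith) hj.2))
    rw [mul_comm, ← sqrt_mul (sub_nonneg.2 hjN)]
    exact sqrt_le_sqrt ((sub_le_mul_neg_deriv_left hf hf' h2j hjN).trans
      (mul_le_mul_of_nonneg_left hfj (sub_nonneg.2 hjN)))
  have hsmall : ∑ j ∈ (Finset.Icc 2 N).filter (fun j : ℕ => (j : ℝ) < M), √(f (log j) - f (log N))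
      ≤ M * √(f (log 2)) := by
    refine (Finset.sum_le_card_nsmul _ _ (√(f (log 2))) fun j hj => ?_).trans ?_
    · obtain ⟨h2j, hjN⟩ := log_two_le_log_of_mem_Icc (Finset.mem_filter.1 hj).1
      have hfj := mul_neg_deriv_right_le_sub hf hf' le_rfl h2j
      have hfN := hfpos _ (h2j.trans hjN)
      refine sqrt_le_sqrt ?_
      nlinarith [hf'neg _ h2j]
    · rw [nsmul_eq_mul]
      gcongr
      exact card_filter_natCast_lt_le (by simp) (by linarith)
  rw [← Finset.sum_filter_add_sum_filter_not _ fun j : ℕ => (j : ℝ) < M]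
  linarith

end LogSum

lemma exists_eventually_lt_of_tendsto_limsup {α : Type*} {L : Filter α} {u : ℝ → α → ℝ}
    {l b : ℝ} (hl : l ≠ 0) (hlb : l < b)
    (h : Tendsto (fun ε => limsup (u ε) L) (𝓝[>] 0) (𝓝 l)) :
    ∃ ε ∈ Ioo 0 1, ∀ᶠ k in L, u ε k < b := by
  have hnear : ∀ᶠ ε in 𝓝[>] 0, limsup (u ε) L ∈ {x | x ≠ 0} ∩ Iio b :=
    h (inter_mem (isOpen_ne.mem_nhds hl) (Iio_mem_nhds hlb))
  obtain ⟨ε, ⟨hne, hlt⟩, hε⟩ := (hnear.and (Ioo_mem_nhdsGT one_pos)).exists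
  -- `limsup` of a sequence that is not bounded above is the junk value `0`
  have hbdd : IsBoundedUnder (· ≤ ·) L (u ε) := by
    by_contra hunb
    exact hne (Real.limsup_of_not_isBoundedUnder hunb)
  exact ⟨ε, hε, eventually_lt_of_limsup_lt hlt hbdd⟩

lemma tendsto_of_le_of_forall_le_mul_add {ι : Type*} {L : Filter ι} {a b : ι → ℝ} {l : ℝ}
    (hb : Tendsto b L (𝓝 l)) (hlow : ∀ᶠ n in L, b n ≤ a n)
    (hup : ∀ r > 1, ∀ δ > 0, ∀ᶠ n in L, a n ≤ r * b n + δ) : Tendsto a L (𝓝 l) := by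
  refine tendsto_order.2 ⟨fun a' ha' => ?_, fun a' ha' => ?_⟩
  · filter_upwards [hb.eventually (lt_mem_nhds ha'), hlow] with n h1 h2 using h1.trans_le h2
  · have hcont : Tendsto (fun δ => (1 + δ) * (l + δ) + δ) (𝓝[>] 0) (𝓝 l) := by
      have : Continuous fun δ : ℝ => (1 + δ) * (l + δ) + δ := by fun_prop
      simpa using (this.tendsto 0).mono_left nhdsWithin_le_nhds
    obtain ⟨δ, hδa, hδ⟩ := ((hcont.eventually (gt_mem_nhds ha')).and self_mem_nhdsWithin).exists
    filter_upwards [hup (1 + δ) (by simpa using hδ) δ hδ, hb.eventually (gt_mem_nhds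
      (show l < l + δ by simpa using hδ))] with n h1 h2
    calc a n ≤ (1 + δ) * b n + δ := h1
      _ ≤ (1 + δ) * (l + δ) + δ := by gcongr
      _ < a' := hδa

lemma eventually_sum_sqrt_sub_le {f f' : ℝ → ℝ}
    (hf : ∀ x ∈ Ici (log 2), HasDerivWithinAt f (f' x) (Ici (log 2)) x)
    (hf' : MonotoneOn f' (Ici (log 2)))
    (hfpos : ∀ x ∈ Ici (log 2), 0 ≤ f x) (hf'neg : ∀ x ∈ Ici (log 2), f' x < 0)
    (hgrow : ∀ ε > (0 : ℝ), Tendsto (fun N : ℕ => (N : ℝ) ^ ε * √(-f' (log N))) atTop atTop)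
    (hratio : Tendsto (fun ε : ℝ => limsup (fun k : ℝ => -f' ((1 - ε) * k) / -f' k) atTop)
      (𝓝[>] 0) (𝓝 1))
    {r δ : ℝ} (hr : 1 < r) (hδ : 0 < δ) :
    ∀ᶠ N : ℕ in atTop, ∑ j ∈ Finset.Icc 2 N, √(f (log j) - f (log N))
      ≤ (r * ∑ j ∈ Finset.Icc 2 N, √(log N - log j) + δ * N) * √(-f' (log N)) := by
  obtain ⟨ε, ⟨hε0, hε1⟩, hev⟩ :=
    exists_eventually_lt_of_tendsto_limsup one_ne_zero (one_lt_pow₀ hr two_ne_zero) hratio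
  have hlog : Tendsto (fun N : ℕ => log N) atTop atTop :=
    tendsto_log_atTop.comp tendsto_natCast_atTop_atTop
  have hM : Tendsto (fun N : ℕ => (N : ℝ) ^ (1 - ε)) atTop atTop :=
    (tendsto_rpow_atTop (by linarith)).comp tendsto_natCast_atTop_atTop
  filter_upwards [hlog.eventually hev, hM.eventually_ge_atTop 2,
    (hgrow ε hε0).eventually_ge_atTop (√(f (log 2)) / δ), eventually_ge_atTop 2]
    with N hratioN hM2 hgrowN hN
  have hN0 : (0 : ℝ) < N := by positivity
  have hL : 0 < -f' (log N) := neg_pos.2 (hf'neg _ (log_le_log two_pos (by exact_mod_cast hN)))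
  have hsplit := sum_sqrt_sub_le hf hf' hfpos (fun x hx => (hf'neg x hx).le) N hM2
  rw [log_rpow hN0] at hsplit
  have hlarge : √(-f' ((1 - ε) * log N)) ≤ r * √(-f' (log N)) := by
    rw [div_lt_iff₀ hL] at hratioN
    calc √(-f' ((1 - ε) * log N)) ≤ √(r ^ 2 * -f' (log N)) := sqrt_le_sqrt hratioN.le
      _ = r * √(-f' (log N)) := by rw [sqrt_mul (by positivity), sqrt_sq (by linarith)]
  have hsmall : (N : ℝ) ^ (1 - ε) * √(f (log 2)) ≤ δ * N * √(-f' (log N)) := by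
    rw [div_le_iff₀ hδ] at hgrowN
    calc (N : ℝ) ^ (1 - ε) * √(f (log 2))
        ≤ (N : ℝ) ^ (1 - ε) * ((N : ℝ) ^ ε * √(-f' (log N)) * δ) := by gcongr
      _ = δ * N * √(-f' (log N)) := by
        rw [← mul_assoc, ← mul_assoc, ← rpow_add hN0, sub_add_cancel, rpow_one]; ring
  have hsum : 0 ≤ ∑ j ∈ Finset.Icc 2 N, √(log N - log j) := by positivity
  nlinarith [mul_le_mul_of_nonneg_right hlarge hsum]

open Filter in
theorem stmt_19_general (f f' f'' : ℝ → ℝ)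
    (hd1 : ∀ x ∈ Set.Ici (Real.log 2), HasDerivWithinAt f (f' x) (Set.Ici (Real.log 2)) x)
    (hd2 : ∀ x ∈ Set.Ici (Real.log 2), HasDerivWithinAt f' (f'' x) (Set.Ici (Real.log 2)) x)
    (hfpos : ∀ x ∈ Set.Ici (Real.log 2), 0 < f x)
    (hf'neg : ∀ x ∈ Set.Ici (Real.log 2), f' x < 0)
    (hf''pos : ∀ x ∈ Set.Ici (Real.log 2), 0 < f'' x)
    (hgrow : ∀ ε > (0 : ℝ),
      Tendsto (fun N : ℕ => (N : ℝ) ^ ε * Real.sqrt (-f' (Real.log N))) atTop atTop)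
    (hratio : Tendsto
      (fun ε : ℝ => limsup (fun k : ℝ => -f' ((1 - ε) * k) / -f' k) atTop)
      (nhdsWithin 0 (Set.Ioi 0)) (nhds 1))
    (S : ℕ → ℝ)
    (hS : ∀ N : ℕ, S N = ∑ j ∈ Finset.Icc 2 N, Real.sqrt (f (Real.log j) - f (Real.log N))) :
    Tendsto (fun N : ℕ => S N / ((N : ℝ) * Real.sqrt (-f' (Real.log N)))) atTop
      (nhds (Real.sqrt Real.pi / 2)) := by
  have hmono : MonotoneOn f' (Ici (log 2)) :=
    monotoneOn_Ici_of_hasDerivWithinAt_nonneg hd2 fun x hx => (hf''pos x hx).le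
  have hfnonneg : ∀ x ∈ Ici (log 2), 0 ≤ f x := fun x hx => (hfpos x hx).le
  have hden : ∀ᶠ N : ℕ in atTop, 0 < (N : ℝ) ∧ 0 < √(-f' (log N)) := by
    filter_upwards [eventually_ge_atTop 2] with N hN
    exact ⟨by positivity,
      sqrt_pos.2 (neg_pos.2 (hf'neg _ (log_le_log two_pos (by exact_mod_cast hN))))⟩
  refine tendsto_of_le_of_forall_le_mul_add tendsto_sum_sqrt_log_sub_log_div_self ?_ ?_
  · filter_upwards [hden] with N ⟨hN, hg⟩
    rw [hS, div_le_div_iff₀ hN (by positivity)]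
    nlinarith [sqrt_neg_deriv_mul_sum_le hd1 hmono N]
  · intro r hr δ hδ
    filter_upwards [eventually_sum_sqrt_sub_le hd1 hmono hfnonneg hf'neg hgrow hratio hr hδ, hden]
      with N hup ⟨hN, hg⟩
    rw [hS, div_le_iff₀ (by positivity)]
    exact hup.trans_eq (by field_simp)

open Filter in
theorem stmt_19 (f f' f'' : ℝ → ℝ)
    (hd1 : ∀ x ∈ Set.Ici (Real.log 2), HasDerivWithinAt f (f' x) (Set.Ici (Real.log 2)) x)
    (hd2 : ∀ x ∈ Set.Ici (Real.log 2), HasDerivWithinAt f' (f'' x) (Set.Ici (Real.log 2)) x)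
    (hd2cont : ContinuousOn f'' (Set.Ici (Real.log 2)))
    (hfpos : ∀ x ∈ Set.Ici (Real.log 2), 0 < f x)
    (hf'neg : ∀ x ∈ Set.Ici (Real.log 2), f' x < 0)
    (hf''pos : ∀ x ∈ Set.Ici (Real.log 2), 0 < f'' x)
    (hf0 : Tendsto f atTop (nhds 0))
    (hgrow : ∀ ε > (0 : ℝ),
      Tendsto (fun N : ℕ => (N : ℝ) ^ ε * Real.sqrt (-f' (Real.log N))) atTop atTop)
    (hratio : Tendsto
      (fun ε : ℝ => limsup (fun k : ℝ => -f' ((1 - ε) * k) / -f' k) atTop)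
      (nhdsWithin 0 (Set.Ioi 0)) (nhds 1))
    (S : ℕ → ℝ)
    (hS : ∀ N : ℕ, S N = ∑ j ∈ Finset.Icc 2 N, Real.sqrt (f (Real.log j) - f (Real.log N))) :
    Tendsto (fun N : ℕ => S N / ((N : ℝ) * Real.sqrt (-f' (Real.log N)))) atTop
      (nhds (Real.sqrt Real.pi / 2)) :=
  stmt_19_general f f' f'' hd1 hd2 hfpos hf'neg hf''pos hgrow hratio S hS
end
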